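/- arXiv:1302.0930 — 8 statements merged into one kernel-verified Lean document; each statement's English description precedes it below -/
import Mathlib

section
/- Let C ⊆ B be ℤⁿ-graded commutative k-algebras which are integral domains, with C a graded subalgebra of B (i.e., C_χ = C ∩ B_χ for all χ), and suppose B is integral over C. Then for every χ ∈ ℤⁿ with B_χ ≠ 0 there exists an integer i ≥ 1 with C_{iχ} ≠ 0. Consequently the ℚ_{≥0}-cones in ℚⁿ generated by the weight sets Σ_B and Σ_C coincide. -/
/-!
Let `b ∈ B_χ` be nonzero and let `p` be a monic polynomial of degree `m` over `C` with `p(b) = 0`.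
Since `b` is homogeneous, the component of degree `mχ` of `p(b)` is `∑ⱼ (pⱼ)_{(m-j)χ} bʲ`, again a
monic relation for `b`, with coefficients in `C` because `C` is graded. As `bᵐ ≠ 0` in a domain,
some `(pⱼ)_{(m-j)χ}` with `j < m` is nonzero: a nonzero element of `C_{(m-j)χ}`. So every weight of
`B` has a positive multiple among the weights of `C`, while `Σ_C ⊆ Σ_B`; hence the cones agree.
-/

/-- The canonical embedding `ℤⁿ → ℚⁿ`. -/
def embQ {n : ℕ} (χ : Fin n → ℤ) : Fin n → ℚ := fun i => (χ i : ℚ)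

/-- The `ℚ≥0`-cone generated by a subset of `ℚⁿ`. -/
def coneGen {n : ℕ} (S : Set (Fin n → ℚ)) : Set (Fin n → ℚ) :=
  {x | ∃ (t : Finset (Fin n → ℚ)) (c : (Fin n → ℚ) → ℚ),
    (t : Set (Fin n → ℚ)) ⊆ S ∧ (∀ v ∈ t, 0 ≤ c v) ∧ x = ∑ v ∈ t, c v • v}

open Polynomial DirectSum Finset

theorem coneGen_eq_span {n : ℕ} (S : Set (Fin n → ℚ)) :
    coneGen S = Submodule.span ℚ≥0 S := by
  ext x
  constructor
  · rintro ⟨t, c, htS, hc, rfl⟩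
    refine Submodule.sum_mem _ fun v hv => ?_
    rw [← Rat.coe_toNNRat _ (hc v hv), NNRat.cast_smul_eq_nnqsmul]
    exact Submodule.smul_mem _ _ (Submodule.subset_span (htS hv))
  · intro hx
    obtain ⟨c, hcS, rfl⟩ := Submodule.mem_span_set.1 hx
    refine ⟨c.support, fun v => c v, hcS, fun v _ => (c v).2, ?_⟩
    simp only [Finsupp.sum, NNRat.cast_smul_eq_nnqsmul]

section Graded

variable {ι : Type*} [DecidableEq ι] [AddRightCancelMonoid ι]

theorem coe_decompose_eval_nsmul {R A : Type*} [CommSemiring R] [CommSemiring A] [Algebra R A]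
    (𝒜 : ι → Submodule R A) [GradedAlgebra 𝒜] {χ : ι} {b : A} (hb : b ∈ 𝒜 χ) (p : A[X]) {m : ℕ}
    (hm : p.natDegree ≤ m) :
    (decompose 𝒜 (p.eval b) (m • χ) : A) =
      ∑ j ∈ range (m + 1), (decompose 𝒜 (p.coeff j) ((m - j) • χ) : A) * b ^ j := by
  rw [eval_eq_sum_range' (Nat.lt_succ_of_le hm), decompose_sum, DFinsupp.finsetSum_apply,
    AddSubmonoidClass.coe_finsetSum]
  refine sum_congr rfl fun j hj => ?_
  rw [← Nat.sub_add_cancel (Nat.lt_succ_iff.1 (mem_range.1 hj)), add_nsmul, Nat.add_sub_cancel]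
  exact coe_decompose_mul_add_of_right_mem 𝒜 (SetLike.pow_mem_graded j hb)

theorem exists_ne_zero_mem_nsmul_of_isIntegral {k B : Type*} [CommRing k] [CommRing B]
    [NoZeroDivisors B] [Algebra k B] {ℬ : ι → Submodule k B} [GradedAlgebra ℬ] {C : Subalgebra k B}
    (hC : ∀ (χ : ι) (c : B), c ∈ C → (decompose ℬ c χ : B) ∈ C)
    {χ : ι} {b : B} (hb : b ∈ ℬ χ) (hb0 : b ≠ 0) (hint : IsIntegral C b) :
    ∃ i : ℕ, 1 ≤ i ∧ ∃ c ∈ C, c ≠ 0 ∧ c ∈ ℬ (i • χ) := by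
  obtain ⟨p, hp, hpb⟩ := hint
  set m := p.natDegree
  set d : ℕ → B := fun j => decompose ℬ (p.coeff j : B) ((m - j) • χ)
  have hsum : ∑ j ∈ range (m + 1), d j * b ^ j = 0 := by
    have := coe_decompose_eval_nsmul ℬ hb (p.map (algebraMap C B)) natDegree_map_le
    simpa [eval_map, hpb, coeff_map] using this.symm
  have hdm : d m = 1 := by
    have hpm : p.coeff m = 1 := hp.coeff_natDegree
    simp only [d, hpm, OneMemClass.coe_one]
    rw [Nat.sub_self, zero_smul]
    exact decompose_of_mem_same ℬ SetLike.GradedOne.one_mem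
  obtain ⟨j, hj, hdj⟩ : ∃ j ∈ range m, d j ≠ 0 := by
    by_contra! h
    rw [sum_range_succ, hdm, one_mul, sum_eq_zero fun j hj => by rw [h j hj, zero_mul],
      zero_add] at hsum
    exact pow_ne_zero m hb0 hsum
  exact ⟨m - j, Nat.sub_pos_of_lt (mem_range.1 hj), d j, hC _ _ (p.coeff j).2, hdj,
    Submodule.coe_mem _⟩

end Graded

theorem coneGen_eq_of_subset_of_exists_nsmul_mem {n : ℕ} {S T : Set (Fin n → ℚ)} (hTS : T ⊆ S)
    (hST : ∀ v ∈ S, ∃ i : ℕ, 0 < i ∧ i • v ∈ T) : coneGen S = coneGen T := by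
  simp only [coneGen_eq_span]
  refine congrArg _ (le_antisymm (Submodule.span_le.2 fun v hv => ?_) (Submodule.span_mono hTS))
  obtain ⟨i, hi, hiv⟩ := hST v hv
  have hi' : (i : ℚ≥0) ≠ 0 := by exact_mod_cast hi.ne'
  rw [← inv_smul_smul₀ hi' v, Nat.cast_smul_eq_nsmul]
  exact Submodule.smul_mem _ _ (Submodule.subset_span hiv)

theorem weight_cone_eq_of_integral_general
    (k : Type) [Field k] {n : ℕ}
    (B : Type) [CommRing B] [IsDomain B] [Algebra k B]
    (ℬ : (Fin n → ℤ) → Submodule k B) [GradedAlgebra ℬ]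
    (C : Subalgebra k B)
    (hgraded : ∀ (χ : Fin n → ℤ) (b : B), b ∈ C → (DirectSum.decompose ℬ b χ : B) ∈ C)
    (hintegral : ∀ b : B, IsIntegral C b) :
    (∀ χ : Fin n → ℤ, ℬ χ ≠ ⊥ → ∃ i : ℕ, 1 ≤ i ∧ ∃ c ∈ C, c ≠ 0 ∧ c ∈ ℬ (i • χ)) ∧
    coneGen (embQ '' {χ : Fin n → ℤ | ℬ χ ≠ ⊥}) =
      coneGen (embQ '' {χ : Fin n → ℤ | ∃ c ∈ C, c ≠ 0 ∧ c ∈ ℬ χ}) := by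
  have hmultiple : ∀ χ : Fin n → ℤ, ℬ χ ≠ ⊥ →
      ∃ i : ℕ, 1 ≤ i ∧ ∃ c ∈ C, c ≠ 0 ∧ c ∈ ℬ (i • χ) := fun χ hχ => by
    obtain ⟨b, hb, hb0⟩ := Submodule.exists_mem_ne_zero_of_ne_bot hχ
    exact exists_ne_zero_mem_nsmul_of_isIntegral hgraded hb hb0 (hintegral b)
  refine ⟨hmultiple, coneGen_eq_of_subset_of_exists_nsmul_mem ?_ ?_⟩
  · exact Set.image_mono fun χ ⟨c, _, hc0, hc⟩ => (Submodule.ne_bot_iff _).2 ⟨c, hc, hc0⟩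
  · rintro _ ⟨χ, hχ, rfl⟩
    obtain ⟨i, hi, c, hcC, hc0, hc⟩ := hmultiple χ hχ
    exact ⟨i, hi, i • χ, ⟨c, hcC, hc0, hc⟩, by funext; simp [embQ]⟩

/-- if `C ⊆ B` are `ℤⁿ`-graded integral domains over `k`, with `C` a graded
subalgebra of `B` and `B` integral over `C`, then for every `χ` with `B_χ ≠ 0` there is
`i ≥ 1` with `C_{iχ} ≠ 0`; consequently the weight cones of `B` and `C` coincide. -/
theorem weight_cone_eq_of_integral
    (k : Type) [Field k] [IsAlgClosed k] [CharZero k] {n : ℕ}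
    (B : Type) [CommRing B] [IsDomain B] [Algebra k B]
    (ℬ : (Fin n → ℤ) → Submodule k B) [GradedAlgebra ℬ]
    (C : Subalgebra k B)
    (hgraded : ∀ (χ : Fin n → ℤ) (b : B), b ∈ C → (DirectSum.decompose ℬ b χ : B) ∈ C)
    (hintegral : ∀ b : B, IsIntegral C b) :
    (∀ χ : Fin n → ℤ, ℬ χ ≠ ⊥ → ∃ i : ℕ, 1 ≤ i ∧ ∃ c ∈ C, c ≠ 0 ∧ c ∈ ℬ (i • χ)) ∧
    coneGen (embQ '' {χ : Fin n → ℤ | ℬ χ ≠ ⊥}) =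
      coneGen (embQ '' {χ : Fin n → ℤ | ∃ c ∈ C, c ≠ 0 ∧ c ∈ ℬ χ}) :=
  weight_cone_eq_of_integral_general k B ℬ C hgraded hintegral
end

section
/- Let (B, φ) be an affine stable toric variety over A. Then for every χ ∈ Σ̂_A there exists an integer m ≥ 1 such that φ(A_{mχ}) = B_{mχ}; that is, the one-dimensional component B_{mχ} is contained in the image of φ. -/
/-- The saturation of the weight set of a `ℤⁿ`-graded algebra:
`Σ̂_A = {χ | mχ ∈ Σ_A for some m > 0}`. -/
def satWeightSet {k A : Type} [CommSemiring k] [Semiring A] [Module k A] {n : ℕ}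
    (𝒜 : (Fin n → ℤ) → Submodule k A) : Set (Fin n → ℤ) :=
  {χ | ∃ m : ℕ, 0 < m ∧ 𝒜 (m • χ) ≠ ⊥}

/-- `(B, φ)` is an affine stable toric variety over the graded algebra `(A, 𝒜)`:
`B` is a reduced `ℤⁿ`-graded `k`-algebra with `dim_k B_χ = 1` for `χ ∈ Σ̂_A` and `B_χ = 0`
otherwise, and `φ : A → B` is a graded `k`-algebra homomorphism making `B` a finitely
generated `A`-module. -/
def IsASTV {k : Type} [Field k] {n : ℕ}
    {A : Type} [CommRing A] [Algebra k A] (𝒜 : (Fin n → ℤ) → Submodule k A)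
    {B : Type} [CommRing B] [Algebra k B] (ℬ : (Fin n → ℤ) → Submodule k B)
    (φ : A →ₐ[k] B) : Prop :=
  IsReduced B ∧
  (∀ (χ : Fin n → ℤ) (a : A), a ∈ 𝒜 χ → φ a ∈ ℬ χ) ∧
  (∀ χ ∈ satWeightSet 𝒜, Module.finrank k (ℬ χ) = 1) ∧
  (∀ χ ∉ satWeightSet 𝒜, ℬ χ = ⊥) ∧
  (∃ s : Finset B, ∀ b : B, ∃ c : B → A, b = ∑ x ∈ s, φ (c x) * x)

/-- The orbit cone of a maximal ideal `𝔪 ⊆ A`: the `ℚ≥0`-cone generated by the weights `χ`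
for which some `f ∈ A_χ` does not lie in `𝔪`. -/
def orbitCone {k : Type} [Field k] {n : ℕ} {A : Type} [CommRing A] [Algebra k A]
    (𝒜 : (Fin n → ℤ) → Submodule k A) (𝔪 : Ideal A) : Set (Fin n → ℚ) :=
  coneGen (embQ '' {χ : Fin n → ℤ | ∃ f ∈ 𝒜 χ, f ∉ 𝔪})

/-- The GIT-cone of a character `ψ`: the intersection of all orbit cones containing `ψ`. -/
def GITCone {k : Type} [Field k] {n : ℕ} {A : Type} [CommRing A] [Algebra k A]
    (𝒜 : (Fin n → ℤ) → Submodule k A) (ψ : Fin n → ℤ) : Set (Fin n → ℚ) :=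
  ⋂ 𝔪 ∈ {𝔪 : Ideal A | 𝔪.IsMaximal ∧ embQ ψ ∈ orbitCone 𝒜 𝔪}, orbitCone 𝒜 𝔪

/-!
An element `b ≠ 0` of the line `B_χ` is integral over `A`, since `B` is a finite `A`-module.
Take a monic equation `bᴺ + φ(a_{N-1}) bᴺ⁻¹ + ⋯ + φ(a₀) = 0` and keep only its component of
degree `Nχ`: each `a_i` may be replaced by its component of degree `(N - i)χ`. As `B` is
reduced, `bᴺ ≠ 0`, so some `φ(a_i)` with `i < N` is a nonzero element of `φ(A_{(N-i)χ})`.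
That nonzero subspace of the line `B_{(N-i)χ}` is the whole line.
-/

open DirectSum Polynomial

theorem Submodule.eq_of_le_of_ne_bot_of_finrank_eq_one {K V : Type*} [DivisionRing K]
    [AddCommGroup V] [Module K V] {W U : Submodule K V} (hle : W ≤ U) (hW : W ≠ ⊥)
    (hU : Module.finrank K U = 1) : W = U := by
  have : FiniteDimensional K U := Module.finite_of_finrank_eq_succ hU
  have : FiniteDimensional K W := Submodule.finiteDimensional_of_le hle
  exact Submodule.eq_of_le_of_finrank_le hle (hU ▸ Submodule.one_le_finrank_iff.2 hW)

theorem mem_satWeightSet_of_ne_bot {k A : Type} [CommSemiring k] [Semiring A] [Module k A]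
    {n : ℕ} {𝒜 : (Fin n → ℤ) → Submodule k A} {χ : Fin n → ℤ} (h : 𝒜 χ ≠ ⊥) :
    χ ∈ satWeightSet 𝒜 :=
  ⟨1, one_pos, by rwa [one_smul]⟩

theorem RingHom.finite_of_forall_eq_sum_mul {A B : Type*} [CommRing A] [CommRing B]
    (f : A →+* B) (s : Finset B) (hs : ∀ b : B, ∃ c : B → A, b = ∑ x ∈ s, f (c x) * x) :
    f.Finite := by
  let : Algebra A B := f.toAlgebra
  refine ⟨⟨s, eq_top_iff.2 fun b _ => ?_⟩⟩
  obtain ⟨c, rfl⟩ := hs b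
  exact Submodule.sum_mem _ fun x hx => Submodule.smul_mem _ (c x) (Submodule.subset_span hx)

section Graded

variable {k ι A B : Type*} [CommSemiring k] [DecidableEq ι]

theorem decompose_map_of_forall_mem [Semiring A] [Semiring B] [Module k A] [Module k B]
    (𝒜 : ι → Submodule k A) (ℬ : ι → Submodule k B) [Decomposition 𝒜] [Decomposition ℬ]
    (f : A →ₗ[k] B) (hf : ∀ i, ∀ a ∈ 𝒜 i, f a ∈ ℬ i) (i : ι) (a : A) :
    (decompose ℬ (f a) i : B) = f (decompose 𝒜 a i) := by
  induction a using DirectSum.Decomposition.inductionOn 𝒜 with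
  | zero => simp
  | @homogeneous j a =>
    by_cases hji : j = i
    · subst hji
      rw [decompose_of_mem_same ℬ (hf j a a.2), decompose_of_mem_same 𝒜 a.2]
    · rw [decompose_of_mem_ne ℬ (hf j a a.2) hji, decompose_of_mem_ne 𝒜 a.2 hji, map_zero]
  | add x y hx hy =>
    rw [map_add, decompose_add, decompose_add, DirectSum.add_apply, DirectSum.add_apply,
      Submodule.coe_add, Submodule.coe_add, hx, hy, map_add]

variable [AddCancelCommMonoid ι] [CommRing A] [CommRing B] [Algebra k A] [Algebra k B]
  {𝒜 : ι → Submodule k A} {ℬ : ι → Submodule k B} [GradedAlgebra 𝒜] [GradedAlgebra ℬ]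
  {φ : A →ₐ[k] B}

theorem sum_map_decompose_coeff_mul_pow_eq_zero (hφ : ∀ i, ∀ a ∈ 𝒜 i, φ a ∈ ℬ i) {χ : ι}
    {b : B} (hb : b ∈ ℬ χ) {p : A[X]} (hp : p.eval₂ (φ : A →+* B) b = 0) :
    ∑ i ∈ Finset.range (p.natDegree + 1),
      φ (decompose 𝒜 (p.coeff i) ((p.natDegree - i) • χ)) * b ^ i = 0 := by
  set N := p.natDegree
  have hcomponent : ∀ i ∈ Finset.range (N + 1), (decompose ℬ (φ (p.coeff i) * b ^ i) (N • χ) : B)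
      = φ (decompose 𝒜 (p.coeff i) ((N - i) • χ)) * b ^ i := by
    intro i hi
    rw [← Nat.sub_add_cancel (Finset.mem_range_succ_iff.1 hi), add_smul,
      coe_decompose_mul_add_of_right_mem ℬ (SetLike.pow_mem_graded i hb), Nat.add_sub_cancel]
    exact congrArg (· * b ^ i) (decompose_map_of_forall_mem 𝒜 ℬ φ.toLinearMap hφ _ _)
  rw [eval₂_eq_sum_range, RingHom.coe_coe] at hp
  rw [← Finset.sum_congr rfl hcomponent, ← AddSubmonoidClass.coe_finsetSum,
    ← DFinsupp.finsetSum_apply, ← decompose_sum, hp, decompose_zero, DirectSum.zero_apply,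
    ZeroMemClass.coe_zero]

theorem exists_nsmul_mem_map_ne_zero_of_isIntegralElem (hφ : ∀ i, ∀ a ∈ 𝒜 i, φ a ∈ ℬ i)
    {χ : ι} {b : B} (hb : b ∈ ℬ χ) (hnil : ¬IsNilpotent b)
    (hint : (φ : A →+* B).IsIntegralElem b) :
    ∃ m, 0 < m ∧ ∃ a ∈ 𝒜 (m • χ), φ a ≠ 0 := by
  obtain ⟨p, hmonic, hp⟩ := hint
  by_contra! hvanish
  have hlower : ∀ i ∈ Finset.range p.natDegree,
      φ (decompose 𝒜 (p.coeff i) ((p.natDegree - i) • χ)) * b ^ i = 0 := fun i hi => by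
    rw [hvanish _ (Nat.sub_pos_of_lt (Finset.mem_range.1 hi)) _ (SetLike.coe_mem _), zero_mul]
  have hleading :
      (decompose 𝒜 (p.coeff p.natDegree) ((p.natDegree - p.natDegree) • χ) : A) = 1 := by
    rw [Nat.sub_self, zero_smul, hmonic.coeff_natDegree]
    exact decompose_of_mem_same 𝒜 SetLike.GradedOne.one_mem
  have hsum := sum_map_decompose_coeff_mul_pow_eq_zero hφ hb hp
  rw [Finset.sum_range_succ, Finset.sum_eq_zero hlower, hleading, map_one, one_mul,
    zero_add] at hsum
  exact hnil ⟨_, hsum⟩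

end Graded

theorem component_in_image_of_power_general
    (k : Type) [Field k] {n : ℕ}
    (A : Type) [CommRing A] [Algebra k A]
    (𝒜 : (Fin n → ℤ) → Submodule k A) [GradedAlgebra 𝒜]
    (B : Type) [CommRing B] [Algebra k B]
    (ℬ : (Fin n → ℤ) → Submodule k B) [GradedAlgebra ℬ]
    (φ : A →ₐ[k] B) (hastv : IsASTV 𝒜 ℬ φ)
    (χ : Fin n → ℤ) (hχ : χ ∈ satWeightSet 𝒜) :
    ∃ m : ℕ, 1 ≤ m ∧ Submodule.map φ.toLinearMap (𝒜 (m • χ)) = ℬ (m • χ) := by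
  obtain ⟨hred, hφ, hline, -, s, hs⟩ := hastv
  have := Module.nontrivial_of_finrank_eq_succ (hline χ hχ)
  obtain ⟨⟨b, hb⟩, hb0⟩ := exists_ne (0 : ℬ χ)
  rw [Ne, Submodule.mk_eq_zero] at hb0
  have hint := ((φ : A →+* B).finite_of_forall_eq_sum_mul s hs).to_isIntegral b
  obtain ⟨m, hm, a, ha, hφa⟩ := exists_nsmul_mem_map_ne_zero_of_isIntegralElem hφ hb
    (mt IsNilpotent.eq_zero hb0) hint
  have hweight : m • χ ∈ satWeightSet 𝒜 := mem_satWeightSet_of_ne_bot <|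
    Submodule.ne_bot_iff _ |>.2 ⟨a, ha, ne_of_apply_ne φ (hφa.trans_eq (map_zero φ).symm)⟩
  refine ⟨m, hm, Submodule.eq_of_le_of_ne_bot_of_finrank_eq_one ?_ ?_ (hline _ hweight)⟩
  · rintro _ ⟨a', ha', rfl⟩
    exact hφ _ _ ha'
  · exact Submodule.ne_bot_iff _ |>.2 ⟨φ a, Submodule.mem_map_of_mem ha, hφa⟩

/-- for an affine stable toric variety `(B, φ)` over `A` and `χ ∈ Σ̂_A` there
exists `m ≥ 1` with `φ(A_{mχ}) = B_{mχ}`. -/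
theorem component_in_image_of_power
    (k : Type) [Field k] [IsAlgClosed k] [CharZero k] {n : ℕ}
    (A : Type) [CommRing A] [IsDomain A] [Algebra k A]
    (𝒜 : (Fin n → ℤ) → Submodule k A) [GradedAlgebra 𝒜]
    (hfg : Algebra.FiniteType k A)
    (B : Type) [CommRing B] [Algebra k B]
    (ℬ : (Fin n → ℤ) → Submodule k B) [GradedAlgebra ℬ]
    (φ : A →ₐ[k] B) (hastv : IsASTV 𝒜 ℬ φ)
    (χ : Fin n → ℤ) (hχ : χ ∈ satWeightSet 𝒜) :
    ∃ m : ℕ, 1 ≤ m ∧ Submodule.map φ.toLinearMap (𝒜 (m • χ)) = ℬ (m • χ) :=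
  component_in_image_of_power_general k A 𝒜 B ℬ φ hastv χ hχ
end

section
/- There exists a finite subset A' ⊆ Σ̂_A, depending only on A, such that for every affine stable toric variety (B, φ) over A, the k-algebra B is generated by the finitely many one-dimensional homogeneous components B_χ with χ ∈ A'. -/
/-!
Fix homogeneous generators of `A` and, for every set `J` of their weights, a finite set
generating the saturation of the monoid spanned by `J` (Gordan's lemma); `A'` is the union of
these sets over all `J`.

Let `(B, φ)` be an affine stable toric variety, `χ ∈ Σ̂_A` and `0 ≠ b ∈ B_χ`. As `B` is reduced,
some prime `p` of `B` avoids `b`. Since `b` is integral over `A`, the degree-`Nχ` part of a monic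
equation of `b` yields a homogeneous `a ∈ A_{mχ}`, `m > 0`, with `φ a ∉ p`; expanding `a` in the
generators, `mχ` lies in the monoid spanned by the set `J` of weights of generators outside
`φ⁻¹ p`. So `χ` is a sum of elements `g` of the Gordan basis of `J`, and each such `B_g` contains
an element outside `p`: a power of it spans the line `B_{Mg}`, which contains the image of an
element of `A_{Mg}` outside `φ⁻¹ p`. The product of these elements is a nonzero element of the
line `B_χ` lying in the subalgebra generated by the `B_g`, `g ∈ A'`.
-/

namespace AddSubmonoid

variable {M : Type*} [AddMonoid M]

def nsmulSaturation (S : AddSubmonoid M) : Set M :=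
  {x | ∃ m : ℕ, 0 < m ∧ m • x ∈ S}

lemma subset_nsmulSaturation (S : AddSubmonoid M) : (S : Set M) ⊆ S.nsmulSaturation :=
  fun x hx => ⟨1, one_pos, by rwa [one_nsmul]⟩

section Gordan

variable {ι : Type*}

lemma exists_sub_mem_closure_of_nsmul_mem_closure (J : Finset (ι → ℤ)) {m : ℕ} (hm : 0 < m)
    {χ : ι → ℤ} (hχ : m • χ ∈ closure (J : Set (ι → ℤ))) :
    ∃ ρ ∈ (closure (J : Set (ι → ℤ))).nsmulSaturation, (∀ l, |ρ l| ≤ ∑ v ∈ J, |v l|) ∧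
      χ - ρ ∈ closure (J : Set (ι → ℤ)) := by
  obtain ⟨e, -, he⟩ := mem_closure_finset.mp hχ
  -- reduce the coefficients of `m • χ` modulo `m`
  set ρ := χ - ∑ v ∈ J, (e v / m) • v
  have hmρ : m • ρ = ∑ v ∈ J, (e v % m) • v := by
    rw [smul_sub, ← he, Finset.smul_sum, ← Finset.sum_sub_distrib]
    refine Finset.sum_congr rfl fun v _ => ?_
    rw [smul_smul, sub_eq_iff_eq_add, ← add_nsmul, Nat.mod_add_div]
  have hbound (l : ι) : |ρ l| ≤ ∑ v ∈ J, |v l| := by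
    refine le_of_mul_le_mul_left ?_ (Int.natCast_pos.mpr hm)
    calc (m : ℤ) * |ρ l| = |∑ v ∈ J, ((e v % m : ℕ) : ℤ) * v l| := by
          rw [← Int.abs_natCast m, ← abs_mul, ← nsmul_eq_mul, ← Pi.smul_apply, hmρ]
          simp [Finset.sum_apply, nsmul_eq_mul]
      _ ≤ ∑ v ∈ J, |((e v % m : ℕ) : ℤ) * v l| := Finset.abs_sum_le_sum_abs _ _
      _ ≤ ∑ v ∈ J, (m : ℤ) * |v l| := by
          refine Finset.sum_le_sum fun v _ => ?_
          rw [abs_mul, Int.abs_natCast]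
          exact mul_le_mul_of_nonneg_right (by exact_mod_cast (Nat.mod_lt _ hm).le) (abs_nonneg _)
      _ = m * ∑ v ∈ J, |v l| := Finset.mul_sum _ _ _ |>.symm
  refine ⟨ρ, ⟨m, hm, hmρ ▸ sum_mem _ fun v hv => nsmul_mem (subset_closure hv) _⟩, hbound, ?_⟩
  rw [sub_sub_cancel]
  exact sum_mem _ fun v hv => nsmul_mem (subset_closure hv) _

/-- Gordan's lemma. -/
theorem exists_finset_nsmulSaturation_subset_closure [Fintype ι] (J : Finset (ι → ℤ)) :
    ∃ G : Finset (ι → ℤ), (G : Set (ι → ℤ)) ⊆ (closure (J : Set (ι → ℤ))).nsmulSaturation ∧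
      (closure (J : Set (ι → ℤ))).nsmulSaturation ⊆ closure (G : Set (ι → ℤ)) := by
  classical
  set C : ι → ℤ := fun l => ∑ v ∈ J, |v l|
  refine ⟨(Finset.Icc (-C) C).filter (· ∈ (closure (J : Set (ι → ℤ))).nsmulSaturation) ∪ J,
    ?_, ?_⟩
  · intro g hg
    simp only [Finset.coe_union, Finset.coe_filter, Set.mem_union, Set.mem_ofPred_eq,
      Finset.mem_coe] at hg
    rcases hg with ⟨-, h⟩ | h
    · exact h
    · exact subset_nsmulSaturation _ (subset_closure h)
  · rintro χ ⟨m, hm, hχ⟩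
    obtain ⟨ρ, hρ, hρC, hχρ⟩ := exists_sub_mem_closure_of_nsmul_mem_closure J hm hχ
    have hρG : ρ ∈ (Finset.Icc (-C) C).filter (· ∈ (closure (J : Set (ι → ℤ))).nsmulSaturation) :=
      Finset.mem_filter.mpr ⟨Finset.mem_Icc.mpr ⟨fun l => neg_le_of_abs_le (hρC l),
        fun l => le_of_abs_le (hρC l)⟩, hρ⟩
    rw [← sub_add_cancel χ ρ]
    exact add_mem (closure_mono (by simp) hχρ)
      (subset_closure (Finset.mem_coe.mpr (Finset.mem_union_left _ hρG)))

variable [Fintype ι]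

noncomputable def gordanBasis (J : Finset (ι → ℤ)) : Finset (ι → ℤ) :=
  (exists_finset_nsmulSaturation_subset_closure J).choose

lemma coe_gordanBasis_subset (J : Finset (ι → ℤ)) :
    (gordanBasis J : Set (ι → ℤ)) ⊆ (closure (J : Set (ι → ℤ))).nsmulSaturation :=
  (exists_finset_nsmulSaturation_subset_closure J).choose_spec.1

lemma nsmulSaturation_subset_closure_gordanBasis (J : Finset (ι → ℤ)) :
    (closure (J : Set (ι → ℤ))).nsmulSaturation ⊆ closure (gordanBasis J : Set (ι → ℤ)) :=
  (exists_finset_nsmulSaturation_subset_closure J).choose_spec.2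

end Gordan

end AddSubmonoid

section GeneratorWeights

variable {ι A : Type*} [CommSemiring A]

open Classical in
noncomputable def genWeightsOutside (T : Finset (ι × A)) (p : Ideal A) : Finset ι :=
  (T.filter fun q => q.2 ∉ p).image Prod.fst

lemma mem_genWeightsOutside {T : Finset (ι × A)} {p : Ideal A} {i : ι} :
    i ∈ genWeightsOutside T p ↔ ∃ q ∈ T, q.2 ∉ p ∧ q.1 = i := by
  classical
  simp [genWeightsOutside, and_assoc]

lemma genWeightsOutside_anti (T : Finset (ι × A)) {p q : Ideal A} (h : p ≤ q) :
    genWeightsOutside T q ⊆ genWeightsOutside T p := by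
  simp only [Finset.subset_iff, mem_genWeightsOutside]
  rintro _ ⟨r, hr, hrq, rfl⟩
  exact ⟨r, hr, fun hrp => hrq (h hrp), rfl⟩

end GeneratorWeights

section Weights

variable {ι A σ : Type*} [AddMonoid ι] [CommSemiring A] [SetLike σ A] (𝒜 : ι → σ)
  [SetLike.GradedMonoid 𝒜]

def weightsOutside (S : Subsemiring A) (p : Ideal A) [p.IsPrime] : AddSubmonoid ι where
  carrier := {i | ∃ a ∈ 𝒜 i, a ∈ S ∧ a ∉ p}
  add_mem' := by
    rintro i j ⟨a, ha, haS, hap⟩ ⟨b, hb, hbS, hbp⟩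
    exact ⟨a * b, SetLike.mul_mem_graded ha hb, mul_mem haS hbS,
      Ideal.IsPrime.mul_notMem ‹_› hap hbp⟩
  zero_mem' :=
    ⟨1, SetLike.GradedOne.one_mem, one_mem S, (Ideal.ne_top_iff_one p).mp ‹p.IsPrime›.ne_top⟩

variable {𝒜}

lemma closure_genWeightsOutside_le {T : Finset (ι × A)} (hT : ∀ q ∈ T, q.2 ∈ 𝒜 q.1)
    (p : Ideal A) [p.IsPrime] :
    AddSubmonoid.closure (genWeightsOutside T p : Set ι) ≤ weightsOutside 𝒜 ⊤ p := by
  refine AddSubmonoid.closure_le.mpr fun i hi => ?_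
  obtain ⟨q, hqT, hqp, rfl⟩ := mem_genWeightsOutside.mp hi
  exact ⟨q.2, hT q hqT, Subsemiring.mem_top _, hqp⟩

end Weights

section GradedAlgebra

variable {ι R A : Type*} [DecidableEq ι] [AddMonoid ι] [CommSemiring R] [CommSemiring A]
  [Algebra R A] {𝒜 : ι → Submodule R A} [GradedAlgebra 𝒜]

variable (𝒜) in
theorem exists_finset_homogeneous_adjoin_eq_top [Algebra.FiniteType R A] :
    ∃ T : Finset (ι × A), (∀ q ∈ T, q.2 ∈ 𝒜 q.1) ∧
      Algebra.adjoin R (Prod.snd '' (T : Set (ι × A))) = ⊤ := by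
  classical
  obtain ⟨s, hs⟩ := Algebra.FiniteType.out (R := R) (A := A)
  refine ⟨s.biUnion fun a => (DirectSum.decompose 𝒜 a).support.image
    fun i => (i, (DirectSum.decompose 𝒜 a i : A)), ?_, ?_⟩
  · simp only [Finset.mem_biUnion, Finset.mem_image]
    rintro _ ⟨a, -, i, -, rfl⟩
    exact SetLike.coe_mem _
  · rw [← top_le_iff, ← hs, Algebra.adjoin_le_iff]
    intro a ha
    rw [← DirectSum.sum_support_decompose 𝒜 a]
    exact sum_mem fun i hi => Algebra.subset_adjoin
      ⟨_, Finset.mem_biUnion.mpr ⟨a, ha, Finset.mem_image_of_mem _ hi⟩, rfl⟩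

variable (𝒜) in
noncomputable def homogeneousGenerators [Algebra.FiniteType R A] : Finset (ι × A) :=
  (exists_finset_homogeneous_adjoin_eq_top 𝒜).choose

lemma mem_homogeneousGenerators [Algebra.FiniteType R A] {q : ι × A}
    (hq : q ∈ homogeneousGenerators 𝒜) : q.2 ∈ 𝒜 q.1 :=
  (exists_finset_homogeneous_adjoin_eq_top 𝒜).choose_spec.1 q hq

variable (𝒜) in
lemma adjoin_homogeneousGenerators [Algebra.FiniteType R A] :
    Algebra.adjoin R (Prod.snd '' (homogeneousGenerators 𝒜 : Set (ι × A))) = ⊤ :=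
  (exists_finset_homogeneous_adjoin_eq_top 𝒜).choose_spec.2

theorem mem_closure_genWeightsOutside {T : Finset (ι × A)} (hT : ∀ q ∈ T, q.2 ∈ 𝒜 q.1)
    (hTgen : Algebra.adjoin R (Prod.snd '' (T : Set (ι × A))) = ⊤) (p : Ideal A) {d : ι} {a : A}
    (ha : a ∈ 𝒜 d) (hap : a ∉ p) :
    d ∈ AddSubmonoid.closure (genWeightsOutside T p : Set ι) := by
  classical
  by_contra hd
  have hmonomial : ∀ μ ∈ Submonoid.closure (Prod.snd '' (T : Set (ι × A))), ∃ e, μ ∈ 𝒜 e ∧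
      (μ ∉ p → e ∈ AddSubmonoid.closure (genWeightsOutside T p : Set ι)) := by
    intro μ hμ
    induction hμ using Submonoid.closure_induction with
    | mem x hx =>
      obtain ⟨q, hq, rfl⟩ := hx
      refine ⟨q.1, hT q hq, fun hqp => AddSubmonoid.subset_closure ?_⟩
      exact mem_genWeightsOutside.mpr ⟨q, hq, hqp, rfl⟩
    | one => exact ⟨0, SetLike.GradedOne.one_mem, fun _ => zero_mem _⟩
    | mul x y _ _ hx hy =>
      obtain ⟨e, hxe, hex⟩ := hx
      obtain ⟨e', hye', hey⟩ := hy
      refine ⟨e + e', SetLike.mul_mem_graded hxe hye', fun hxy => add_mem ?_ ?_⟩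
      · exact hex fun h => hxy (p.mul_mem_right y h)
      · exact hey fun h => hxy (p.mul_mem_left x h)
  -- the degree-`d` part of every element lies in `p`, since no monomial of degree `d` avoids `p`
  have hproj : (⊤ : Submodule R A) ≤ (p.restrictScalars R).comap (GradedAlgebra.proj 𝒜 d) := by
    rw [← Algebra.top_toSubmodule, ← hTgen, Algebra.adjoin_eq_span, Submodule.span_le]
    intro μ hμ
    obtain ⟨e, hμe, hep⟩ := hmonomial μ hμ
    rw [SetLike.mem_coe, Submodule.mem_comap, Submodule.restrictScalars_mem,
      GradedAlgebra.proj_apply]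
    by_cases hed : e = d
    · subst hed
      rw [DirectSum.decompose_of_mem_same 𝒜 hμe]
      exact not_not.mp (mt hep hd)
    · rw [DirectSum.decompose_of_mem_ne 𝒜 hμe hed]
      exact p.zero_mem
  apply hap
  simpa [GradedAlgebra.proj_apply, DirectSum.decompose_of_mem_same 𝒜 ha] using
    hproj (Submodule.mem_top (x := a))

end GradedAlgebra

theorem Submodule.exists_smul_eq_of_finrank_eq_one {k M : Type*} [Field k] [AddCommGroup M]
    [Module k M] {V : Submodule k M} (hV : Module.finrank k V = 1) {u v : M} (hu : u ∈ V)
    (hu0 : u ≠ 0) (hv : v ∈ V) : ∃ c : k, c • u = v := by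
  obtain ⟨c, hc⟩ := (finrank_eq_one_iff_of_nonzero' (⟨u, hu⟩ : V) (by simpa using hu0)).mp hV
    ⟨v, hv⟩
  exact ⟨c, congrArg Subtype.val hc⟩

theorem Submodule.le_of_finrank_eq_one {k M : Type*} [Field k] [AddCommGroup M]
    [Module k M] {V : Submodule k M} (hV : Module.finrank k V = 1) (W : Submodule k M) {z : M}
    (hzV : z ∈ V) (hzW : z ∈ W) (hz0 : z ≠ 0) : V ≤ W := by
  intro v hv
  obtain ⟨c, rfl⟩ := exists_smul_eq_of_finrank_eq_one hV hzV hz0 hv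
  exact W.smul_mem c hzW

theorem RingHom.Finite.of_forall_eq_sum {A B : Type*} [CommRing A] [CommRing B] (f : A →+* B)
    (s : Finset B) (h : ∀ b : B, ∃ c : B → A, b = ∑ x ∈ s, f (c x) * x) : f.Finite := by
  let := f.toAlgebra
  refine ⟨⟨s, eq_top_iff.mpr fun b _ => ?_⟩⟩
  obtain ⟨c, rfl⟩ := h b
  exact sum_mem fun x hx => Submodule.smul_mem _ (c x) (Submodule.subset_span hx)

section Integrality

variable {ι A B σ τ : Type*} [DecidableEq ι] [AddCancelCommMonoid ι] [CommRing A] [CommRing B]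
  [SetLike σ A] [AddSubgroupClass σ A] [SetLike τ B] [AddSubgroupClass τ B]
  {𝒜 : ι → σ} {ℬ : ι → τ} [GradedRing 𝒜] [GradedRing ℬ]

theorem exists_nsmul_map_notMem_of_isIntegralElem (f : 𝒜 →+*ᵍ ℬ) {p : Ideal B} [p.IsPrime]
    {χ : ι} {b : B} (hb : b ∈ ℬ χ) (hbp : b ∉ p) (hint : f.toRingHom.IsIntegralElem b) :
    ∃ m, 0 < m ∧ ∃ a ∈ 𝒜 (m • χ), f a ∉ p := by
  obtain ⟨P, hPmonic, hPb⟩ := hint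
  set N := P.natDegree
  have hterm : ∀ i ∈ Finset.range (N + 1),
      (DirectSum.decompose ℬ (f (P.coeff i) * b ^ i) (N • χ) : B) =
        f (DirectSum.decompose 𝒜 (P.coeff i) ((N - i) • χ)) * b ^ i := by
    intro i hi
    rw [show N • χ = (N - i) • χ + i • χ by
        rw [← add_nsmul, Nat.sub_add_cancel (Finset.mem_range_succ_iff.mp hi)],
      DirectSum.coe_decompose_mul_add_of_right_mem ℬ (SetLike.pow_mem_graded i hb),
      GradedRingHom.map_directSumDecompose]
  have hsum : ∑ i ∈ Finset.range N, f (DirectSum.decompose 𝒜 (P.coeff i) ((N - i) • χ)) * b ^ i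
      + b ^ N = 0 := by
    have h := congrArg (GradedRing.proj ℬ (N • χ)) hPb
    rw [Polynomial.eval₂_eq_sum_range, map_sum, map_zero] at h
    simp only [GradedRing.proj_apply, GradedRingHom.coe_toRingHom] at h
    rw [Finset.sum_congr rfl hterm, Finset.sum_range_succ, Nat.sub_self, zero_nsmul,
      hPmonic.coeff_natDegree, DirectSum.decompose_of_mem_same 𝒜 SetLike.GradedOne.one_mem,
      map_one, one_mul] at h
    exact h
  by_contra! H
  refine hbp (‹p.IsPrime›.mem_of_pow_mem N ?_)
  rw [eq_neg_of_add_eq_zero_right hsum]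
  refine p.neg_mem (sum_mem fun i hi => p.mul_mem_right _ (H _ ?_ _ (SetLike.coe_mem _)))
  exact Nat.sub_pos_of_lt (Finset.mem_range.mp hi)

end Integrality

theorem exists_mem_notMem_of_nsmul_mem {ι k B : Type*} [AddMonoid ι] [Field k] [CommRing B]
    [IsReduced B] [Algebra k B] {ℬ : ι → Submodule k B} [SetLike.GradedMonoid ℬ] {p : Ideal B}
    [p.IsPrime] {g : ι} {M : ℕ} (hM : M ≠ 0) (hg : ℬ g ≠ ⊥)
    (hMg : Module.finrank k (ℬ (M • g)) = 1) {x : B} (hx : x ∈ ℬ (M • g)) (hxp : x ∉ p) :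
    ∃ y ∈ ℬ g, y ∉ p := by
  obtain ⟨y, hy, hy0⟩ := (Submodule.ne_bot_iff _).mp hg
  refine ⟨y, hy, fun hyp => hxp ?_⟩
  obtain ⟨c, rfl⟩ := Submodule.exists_smul_eq_of_finrank_eq_one hMg
    (SetLike.pow_mem_graded M hy) (pow_ne_zero M hy0) hx
  rw [Algebra.smul_def]
  exact p.mul_mem_left _ (p.pow_mem_of_mem hyp M (Nat.pos_of_ne_zero hM))

lemma IsASTV.ne_bot {k : Type} [Field k] {n : ℕ} {A : Type} [CommRing A] [Algebra k A]
    {𝒜 : (Fin n → ℤ) → Submodule k A} {B : Type} [CommRing B] [Algebra k B]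
    {ℬ : (Fin n → ℤ) → Submodule k B} {φ : A →ₐ[k] B} (h : IsASTV 𝒜 ℬ φ) {g : Fin n → ℤ}
    (hg : g ∈ satWeightSet 𝒜) : ℬ g ≠ ⊥ := by
  intro hbot
  have := h.2.2.1 g hg
  rw [hbot, finrank_bot] at this
  exact zero_ne_one this

section StableToric

variable {k : Type} [Field k] {n : ℕ} {A : Type} [CommRing A] [Algebra k A]
  (𝒜 : (Fin n → ℤ) → Submodule k A) [GradedAlgebra 𝒜] [Algebra.FiniteType k A]

/-- Which set of generator weights matters for a given `B` depends on a prime of `B`, so the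
Gordan bases of all of them are taken. -/
noncomputable def uniformWeights : Finset (Fin n → ℤ) :=
  (genWeightsOutside (homogeneousGenerators 𝒜) ⊥).powerset.biUnion AddSubmonoid.gordanBasis

lemma uniformWeights_subset_satWeightSet [IsDomain A] :
    (uniformWeights 𝒜 : Set (Fin n → ℤ)) ⊆ satWeightSet 𝒜 := by
  intro g hg
  obtain ⟨J, hJ, hgJ⟩ := Finset.mem_biUnion.mp hg
  obtain ⟨m, hm, hmg⟩ := AddSubmonoid.coe_gordanBasis_subset J hgJ
  obtain ⟨a, ha, -, ha0⟩ := closure_genWeightsOutside_le (fun _ => mem_homogeneousGenerators) ⊥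
    (AddSubmonoid.closure_mono (Finset.coe_subset.mpr (Finset.mem_powerset.mp hJ)) hmg)
  exact ⟨m, hm, (Submodule.ne_bot_iff _).mpr ⟨a, ha, ha0⟩⟩

variable {𝒜} {B : Type} [CommRing B] [Algebra k B] {ℬ : (Fin n → ℤ) → Submodule k B}
  [GradedAlgebra ℬ] {φ : A →ₐ[k] B}

lemma IsASTV.closure_gordanBasis_le_weightsOutside [IsDomain A] (h : IsASTV 𝒜 ℬ φ) (p : Ideal B)
    [p.IsPrime] :
    AddSubmonoid.closure (AddSubmonoid.gordanBasis
        (genWeightsOutside (homogeneousGenerators 𝒜) (p.comap φ)) : Set (Fin n → ℤ)) ≤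
      weightsOutside ℬ
        (Algebra.adjoin k (⋃ g ∈ uniformWeights 𝒜, (ℬ g : Set B))).toSubsemiring p := by
  have ⟨hred, hφ, hdim, _⟩ := h
  refine AddSubmonoid.closure_le.mpr fun g hg => ?_
  have hgA' : g ∈ uniformWeights 𝒜 := Finset.mem_biUnion.mpr
    ⟨_, Finset.mem_powerset.mpr (genWeightsOutside_anti _ bot_le), hg⟩
  obtain ⟨M, hM, hMg⟩ := AddSubmonoid.coe_gordanBasis_subset _ hg
  obtain ⟨x, hx, -, hxp⟩ :=
    closure_genWeightsOutside_le (fun _ => mem_homogeneousGenerators) (p.comap φ) hMg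
  have hMgsat : M • g ∈ satWeightSet 𝒜 := ⟨1, one_pos, by
    rw [one_nsmul]
    exact (Submodule.ne_bot_iff _).mpr ⟨x, hx, fun h => hxp (h ▸ Ideal.zero_mem _)⟩⟩
  obtain ⟨y, hy, hyp⟩ := exists_mem_notMem_of_nsmul_mem hM.ne'
    (h.ne_bot (uniformWeights_subset_satWeightSet 𝒜 hgA')) (hdim _ hMgsat) (hφ _ _ hx) hxp
  exact ⟨y, hy, Algebra.subset_adjoin (Set.mem_biUnion hgA' hy), hyp⟩

theorem IsASTV.le_adjoin_uniformWeights [IsDomain A] (h : IsASTV 𝒜 ℬ φ) (χ : Fin n → ℤ) :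
    ℬ χ ≤ Subalgebra.toSubmodule (Algebra.adjoin k (⋃ g ∈ uniformWeights 𝒜, (ℬ g : Set B))) := by
  have ⟨_, hφ, hdim, hzero, s, hs⟩ := h
  by_cases hχ : χ ∉ satWeightSet 𝒜
  · rw [hzero χ hχ]
    exact bot_le
  rw [not_not] at hχ
  obtain ⟨b, hb, hb0⟩ := (Submodule.ne_bot_iff _).mp (h.ne_bot hχ)
  obtain ⟨p, hp, hbp⟩ : ∃ p : Ideal B, p.IsPrime ∧ b ∉ p := by
    by_contra! H
    exact hb0 (nilpotent_iff_mem_prime.mpr H).eq_zero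
  let f : 𝒜 →+*ᵍ ℬ := ⟨φ.toRingHom, hφ _ _⟩
  obtain ⟨m, hm, a, ha, hap⟩ := exists_nsmul_map_notMem_of_isIntegralElem f hb hbp
    ((RingHom.Finite.of_forall_eq_sum f.toRingHom s hs).to_isIntegral b)
  have hχJ := AddSubmonoid.nsmulSaturation_subset_closure_gordanBasis _
    ⟨m, hm, mem_closure_genWeightsOutside (fun _ => mem_homogeneousGenerators)
      (adjoin_homogeneousGenerators 𝒜) (p.comap φ) ha hap⟩
  obtain ⟨z, hz, hzS, hzp⟩ := h.closure_gordanBasis_le_weightsOutside p hχJ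
  exact Submodule.le_of_finrank_eq_one (hdim χ hχ) _ hz hzS fun h => hzp (h ▸ p.zero_mem)

end StableToric

theorem uniform_finite_generating_weights_general
    (k : Type) [Field k] {n : ℕ}
    (A : Type) [CommRing A] [IsDomain A] [Algebra k A]
    (𝒜 : (Fin n → ℤ) → Submodule k A) [GradedAlgebra 𝒜]
    (hfg : Algebra.FiniteType k A) :
    ∃ A' : Finset (Fin n → ℤ), (A' : Set (Fin n → ℤ)) ⊆ satWeightSet 𝒜 ∧
      ∀ (B : Type) [CommRing B] [Algebra k B]
        (ℬ : (Fin n → ℤ) → Submodule k B) [GradedAlgebra ℬ] (φ : A →ₐ[k] B),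
        IsASTV 𝒜 ℬ φ →
          Algebra.adjoin k (⋃ χ ∈ A', (ℬ χ : Set B)) = ⊤ := by
  classical
  refine ⟨uniformWeights 𝒜, uniformWeights_subset_satWeightSet 𝒜,
    fun B _ _ ℬ _ φ h => eq_top_iff.mpr fun b _ => ?_⟩
  rw [← DirectSum.sum_support_decompose ℬ b]
  exact sum_mem fun χ _ => h.le_adjoin_uniformWeights χ (SetLike.coe_mem _)

/-- there is a finite subset `A' ⊆ Σ̂_A`, depending only on `(A, 𝒜)`, such that
for every affine stable toric variety `(B, φ)` over `A`, the `k`-algebra `B` is generated by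
the homogeneous components `B_χ`, `χ ∈ A'`. -/
theorem uniform_finite_generating_weights
    (k : Type) [Field k] [IsAlgClosed k] [CharZero k] {n : ℕ}
    (A : Type) [CommRing A] [IsDomain A] [Algebra k A]
    (𝒜 : (Fin n → ℤ) → Submodule k A) [GradedAlgebra 𝒜]
    (hfg : Algebra.FiniteType k A) :
    ∃ A' : Finset (Fin n → ℤ), (A' : Set (Fin n → ℤ)) ⊆ satWeightSet 𝒜 ∧
      ∀ (B : Type) [CommRing B] [Algebra k B]
        (ℬ : (Fin n → ℤ) → Submodule k B) [GradedAlgebra ℬ] (φ : A →ₐ[k] B),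
        IsASTV 𝒜 ℬ φ →
          Algebra.adjoin k (⋃ χ ∈ A', (ℬ χ : Set B)) = ⊤ :=
  uniform_finite_generating_weights_general k A 𝒜 hfg
end

section
/- Let (B, φ) be an affine stable toric variety over A, let ψ ∈ Σ̂_A, and let χ, χ' be lattice points of the GIT-cone σ_ψ (so χ, χ' ∈ σ_ψ ∩ ℤⁿ ⊆ Σ̂_A). Then the multiplication map B_χ ⊗_k B_{χ'} → B_{χ+χ'} is an isomorphism of one-dimensional k-vector spaces; equivalently, for any nonzero b ∈ B_χ and b' ∈ B_{χ'} the product b·b' is nonzero. -/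
/-!
Choose a nonzero `x ∈ B_ψ` and, `B` being reduced and Jacobson (it is finite over the finitely
generated `A`), a maximal ideal `M` of `B` with `x ∉ M`. The weights `τ` for which `B_τ` has an
element outside `M` form a monoid, which is saturated because the pieces `B_τ` are lines and `B` is
reduced; hence it contains every lattice point of the cone it spans. As `B` is integral over `A`,
the homogeneous parts of an integral equation for `x` produce `a ∈ A_{mψ}`, `m > 0`, with
`φ a ∉ M`, so `ψ` lies in the orbit cone of the maximal ideal `φ⁻¹ M`, and this orbit cone is
spanned by such weights. Thus `χ` and `χ'` are such weights, every nonzero element of `B_χ` or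
`B_{χ'}` lies outside the prime `M`, and so does their product.
-/

def embQHom (n : ℕ) : (Fin n → ℤ) →+ (Fin n → ℚ) :=
  (Int.castAddHom ℚ).compLeft (Fin n)

theorem embQHom_apply {n : ℕ} (χ : Fin n → ℤ) : embQHom n χ = embQ χ := rfl

theorem embQ_nsmul {n : ℕ} (m : ℕ) (χ : Fin n → ℤ) : embQ (m • χ) = m • embQ χ :=
  map_nsmul (embQHom n) m χ

theorem embQ_injective {n : ℕ} : Function.Injective (embQ (n := n)) :=
  fun _ _ h => funext fun i => Int.cast_injective (congrFun h i)

theorem coneGen_mono {n : ℕ} {S T : Set (Fin n → ℚ)} (h : S ⊆ T) : coneGen S ⊆ coneGen T :=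
  fun _ ⟨t, c, ht, hc, hx⟩ => ⟨t, c, ht.trans h, hc, hx⟩

theorem smul_mem_coneGen {n : ℕ} {S : Set (Fin n → ℚ)} {v : Fin n → ℚ} (hv : v ∈ S)
    {c : ℚ} (hc : 0 ≤ c) : c • v ∈ coneGen S :=
  ⟨{v}, fun _ => c, by simpa using hv, fun _ _ => hc, by simp⟩

theorem Finset.exists_nat_mul_eq_natCast {α : Type*} (t : Finset α) (c : α → ℚ)
    (hc : ∀ v ∈ t, 0 ≤ c v) :
    ∃ N : ℕ, 0 < N ∧ ∀ v ∈ t, ∃ m : ℕ, (m : ℚ) = N * c v := by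
  refine ⟨∏ v ∈ t, (c v).den, Finset.prod_pos fun v _ => (c v).pos, fun v hv => ?_⟩
  obtain ⟨e, he⟩ := Finset.dvd_prod_of_mem (fun v => (c v).den) hv
  lift (c v).num to ℕ using Rat.num_nonneg.mpr (hc v hv) with m hm
  refine ⟨e * m, ?_⟩
  rw [he, Nat.cast_mul, Nat.cast_mul, mul_comm ((c v).den : ℚ), mul_assoc, Rat.den_mul_eq_num,
    ← hm, Int.cast_natCast]

theorem exists_nsmul_mem_closure_of_embQ_mem_coneGen {n : ℕ} {G : Set (Fin n → ℤ)}
    {τ : Fin n → ℤ} (h : embQ τ ∈ coneGen (embQ '' G)) :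
    ∃ N : ℕ, 0 < N ∧ N • τ ∈ AddSubmonoid.closure G := by
  obtain ⟨t, c, ht, hc, hτ⟩ := h
  have ht' : ∀ v ∈ t, ∃ σ ∈ G, embQ σ = v := fun v hv => ht hv
  choose! g hg hgv using ht'
  obtain ⟨N, hN, hm⟩ := t.exists_nat_mul_eq_natCast c hc
  choose! m hm using hm
  have hNτ : N • τ = ∑ v ∈ t, m v • g v := embQ_injective <| by
    change embQHom n (N • τ) = embQHom n (∑ v ∈ t, m v • g v)
    rw [map_nsmul, map_sum, embQHom_apply, hτ, Finset.smul_sum]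
    refine Finset.sum_congr rfl fun v hv => ?_
    rw [map_nsmul, embQHom_apply, hgv v hv, ← Nat.cast_smul_eq_nsmul ℚ,
      ← Nat.cast_smul_eq_nsmul ℚ, hm v hv, smul_smul]
  refine ⟨N, hN, hNτ ▸ ?_⟩
  exact AddSubmonoid.sum_mem _ fun v hv =>
    AddSubmonoid.nsmul_mem _ (AddSubmonoid.subset_closure (hg v hv)) _

theorem AddSubmonoid.mem_of_embQ_mem_coneGen {n : ℕ} {S : AddSubmonoid (Fin n → ℤ)}
    (hsat : ∀ (τ : Fin n → ℤ) (N : ℕ), 0 < N → N • τ ∈ S → τ ∈ S) {τ : Fin n → ℤ}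
    (h : embQ τ ∈ coneGen (embQ '' S)) : τ ∈ S := by
  obtain ⟨N, hN, hNτ⟩ := exists_nsmul_mem_closure_of_embQ_mem_coneGen h
  exact hsat τ N hN (by rwa [AddSubmonoid.closure_eq] at hNτ)

theorem mem_satWeightSet_of_nsmul_mem {k A : Type} [CommSemiring k] [Semiring A] [Module k A]
    {n : ℕ} {𝒜 : (Fin n → ℤ) → Submodule k A} {τ : Fin n → ℤ} {m : ℕ} (hm : 0 < m)
    (h : m • τ ∈ satWeightSet 𝒜) : τ ∈ satWeightSet 𝒜 := by
  obtain ⟨m', hm', hne⟩ := h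
  exact ⟨m' * m, Nat.mul_pos hm' hm, by rwa [mul_smul]⟩

theorem embQ_mem_orbitCone_of_nsmul {k : Type} [Field k] {n : ℕ} {A : Type} [CommRing A]
    [Algebra k A] {𝒜 : (Fin n → ℤ) → Submodule k A} {𝔪 : Ideal A} {ψ : Fin n → ℤ} {m : ℕ}
    (hm : 0 < m) {a : A} (ha : a ∈ 𝒜 (m • ψ)) (ha𝔪 : a ∉ 𝔪) : embQ ψ ∈ orbitCone 𝒜 𝔪 := by
  have hψ : embQ ψ = (m : ℚ)⁻¹ • embQ (m • ψ) := by
    rw [embQ_nsmul, ← Nat.cast_smul_eq_nsmul ℚ, inv_smul_smul₀ (by positivity)]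
  rw [hψ, orbitCone]
  refine smul_mem_coneGen ?_ (by positivity)
  exact ⟨m • ψ, ⟨a, ha, ha𝔪⟩, rfl⟩

section Graded

variable {ι A B σ τ : Type*} [DecidableEq ι] [CommRing A] [CommRing B]
  [SetLike σ A] [AddSubmonoidClass σ A] [SetLike τ B] [AddSubmonoidClass τ B]

def weightsAvoiding [AddMonoid ι] (ℬ : ι → τ) [SetLike.GradedMonoid ℬ] (p : Ideal B)
    [hp : p.IsPrime] : AddSubmonoid ι where
  carrier := {i | ∃ x ∈ ℬ i, x ∉ p}
  zero_mem' := ⟨1, SetLike.GradedOne.one_mem, (Ideal.ne_top_iff_one p).mp hp.ne_top⟩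
  add_mem' := fun ⟨x, hx, hxp⟩ ⟨y, hy, hyp⟩ =>
    ⟨x * y, SetLike.GradedMul.mul_mem hx hy, hp.mul_notMem hxp hyp⟩

variable [AddCancelCommMonoid ι] {𝒜 : ι → σ} {ℬ : ι → τ} [GradedRing 𝒜] [GradedRing ℬ]

theorem GradedRingHom.proj_add_map_mul_of_mem (f : 𝒜 →+*ᵍ ℬ) (i : ι) (a : A) {j : ι} {b : B}
    (hb : b ∈ ℬ j) : GradedRing.proj ℬ (i + j) (f a * b) = f (GradedRing.proj 𝒜 i a) * b := by
  rw [GradedRing.proj_apply, DirectSum.coe_decompose_mul_add_of_right_mem ℬ hb,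
    ← GradedRingHom.map_directSumDecompose, GradedRing.proj_apply]

theorem GradedRingHom.exists_map_notMem_of_isIntegralElem (f : 𝒜 →+*ᵍ ℬ) {i : ι} {x : B}
    (hx : x ∈ ℬ i) (hint : f.toRingHom.IsIntegralElem x) {p : Ideal B} [hp : p.IsPrime]
    (hxp : x ∉ p) : ∃ m : ℕ, 0 < m ∧ ∃ a ∈ 𝒜 (m • i), f a ∉ p := by
  obtain ⟨P, hPm, hPx⟩ := hint
  rw [Polynomial.eval₂_eq_sum_range, GradedRingHom.coe_toRingHom] at hPx
  have hcoeffN := hPm.coeff_natDegree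
  generalize P.natDegree = N at hPx hcoeffN
  -- The degree `N • i` part of `P(x) = 0` is a monic equation for `x` with homogeneous coefficients.
  set c : ℕ → A := fun j => GradedRing.proj 𝒜 ((N - j) • i) (P.coeff j)
  have heq : ∑ j ∈ Finset.range (N + 1), f (c j) * x ^ j = 0 := by
    rw [← map_zero (GradedRing.proj ℬ (N • i)), ← hPx, map_sum]
    refine Finset.sum_congr rfl fun j hj => ?_
    rw [← Nat.sub_add_cancel (Finset.mem_range_succ_iff.mp hj), add_nsmul,
      f.proj_add_map_mul_of_mem _ _ (SetLike.pow_mem_graded j hx)]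
  have hcN : c N = 1 := by
    change GradedRing.proj 𝒜 ((N - N) • i) (P.coeff N) = 1
    rw [Nat.sub_self, zero_nsmul, hcoeffN, GradedRing.proj_apply]
    exact DirectSum.decompose_of_mem_same 𝒜 SetLike.GradedOne.one_mem
  by_contra! hall
  have hlow : ∀ j < N, f (c j) ∈ p := fun j hj =>
    hall (N - j) (Nat.sub_pos_of_lt hj) _ (by simp only [c, GradedRing.proj_apply, SetLike.coe_mem])
  rw [Finset.sum_range_succ, hcN, map_one, one_mul] at heq
  refine hxp (hp.mem_of_pow_mem N ?_)
  rw [eq_neg_of_add_eq_zero_right heq]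
  exact p.neg_mem (p.sum_mem fun j hj => p.mul_mem_right _ (hlow j (Finset.mem_range.mp hj)))

end Graded

theorem Ideal.exists_isMaximal_notMem_of_ne_zero {R : Type*} [CommRing R] [hR : IsJacobsonRing R]
    [IsReduced R] {x : R} (hx : x ≠ 0) : ∃ M : Ideal R, M.IsMaximal ∧ x ∉ M := by
  by_contra! h
  refine hx (Ideal.mem_bot.mp ?_)
  rw [← hR.out Ideal.isRadical_bot, Ideal.jacobson]
  exact Submodule.mem_sInf.mpr fun M hM => h M hM.2

namespace IsASTV

variable {k : Type} [Field k] {n : ℕ} {A : Type} [CommRing A] [Algebra k A]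
  {𝒜 : (Fin n → ℤ) → Submodule k A} {B : Type} [CommRing B] [Algebra k B]
  {ℬ : (Fin n → ℤ) → Submodule k B} {φ : A →ₐ[k] B}

theorem map_mem (h : IsASTV 𝒜 ℬ φ) {τ : Fin n → ℤ} {a : A} (ha : a ∈ 𝒜 τ) : φ a ∈ ℬ τ :=
  h.2.1 τ a ha

theorem mem_satWeightSet_of_mem (h : IsASTV 𝒜 ℬ φ) {τ : Fin n → ℤ} {x : B} (hx : x ∈ ℬ τ)
    (hx0 : x ≠ 0) : τ ∈ satWeightSet 𝒜 := by
  obtain ⟨-, -, -, hbot, -⟩ := h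
  by_contra hτ
  rw [hbot τ hτ] at hx
  exact hx0 hx

theorem exists_mem_ne_zero (h : IsASTV 𝒜 ℬ φ) {τ : Fin n → ℤ} (hτ : τ ∈ satWeightSet 𝒜) :
    ∃ x ∈ ℬ τ, x ≠ 0 := by
  obtain ⟨-, -, hrank, -, -⟩ := h
  by_contra! hzero
  have := hrank τ hτ
  rw [(Submodule.eq_bot_iff _).mpr hzero, finrank_bot] at this
  exact zero_ne_one this

theorem exists_smul_eq (h : IsASTV 𝒜 ℬ φ) {τ : Fin n → ℤ} {x y : B} (hx : x ∈ ℬ τ)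
    (hx0 : x ≠ 0) (hy : y ∈ ℬ τ) : ∃ c : k, c • x = y := by
  have hrank := h.2.2.1 τ (h.mem_satWeightSet_of_mem hx hx0)
  obtain ⟨c, hc⟩ := (finrank_eq_one_iff_of_nonzero' (⟨x, hx⟩ : ℬ τ) (by simpa using hx0)).mp
    hrank ⟨y, hy⟩
  exact ⟨c, congrArg Subtype.val hc⟩

theorem finite (h : IsASTV 𝒜 ℬ φ) : (φ : A →+* B).Finite := by
  algebraize [(φ : A →+* B)]
  obtain ⟨-, -, -, -, s, hs⟩ := h
  refine ⟨⟨s, eq_top_iff.mpr fun b _ => ?_⟩⟩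
  obtain ⟨c, rfl⟩ := hs b
  exact Submodule.sum_mem _ fun x hx => Submodule.smul_mem _ (c x) (Submodule.subset_span hx)

def gradedRingHom [GradedAlgebra 𝒜] [GradedAlgebra ℬ] (h : IsASTV 𝒜 ℬ φ) : 𝒜 →+*ᵍ ℬ :=
  ⟨φ, h.map_mem⟩

variable [GradedAlgebra ℬ] {p : Ideal B} [p.IsPrime]

theorem notMem_of_mem_weightsAvoiding (h : IsASTV 𝒜 ℬ φ) {τ : Fin n → ℤ}
    (hτ : τ ∈ weightsAvoiding ℬ p) {b : B} (hb : b ∈ ℬ τ) (hb0 : b ≠ 0) : b ∉ p := by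
  obtain ⟨x, hx, hxp⟩ := hτ
  obtain ⟨c, rfl⟩ := h.exists_smul_eq hb hb0 hx
  exact fun hbp => hxp (p.smul_of_tower_mem c hbp)

theorem mem_weightsAvoiding_of_nsmul_mem (h : IsASTV 𝒜 ℬ φ) (τ : Fin n → ℤ) (m : ℕ)
    (hm : 0 < m) (hmτ : m • τ ∈ weightsAvoiding ℬ p) : τ ∈ weightsAvoiding ℬ p := by
  obtain ⟨y, hy, hyp⟩ := hmτ
  have hy0 : y ≠ 0 := fun hy0 => hyp (hy0 ▸ p.zero_mem)
  obtain ⟨x, hx, hx0⟩ :=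
    h.exists_mem_ne_zero (mem_satWeightSet_of_nsmul_mem hm (h.mem_satWeightSet_of_mem hy hy0))
  have : IsReduced B := h.1
  have hxm := h.notMem_of_mem_weightsAvoiding ⟨y, hy, hyp⟩ (SetLike.pow_mem_graded m hx)
    (pow_ne_zero m hx0)
  exact ⟨x, hx, fun hxp => hxm (p.pow_mem_of_mem hxp m hm)⟩

theorem orbitCone_comap_subset (h : IsASTV 𝒜 ℬ φ) :
    orbitCone 𝒜 (p.comap φ) ⊆ coneGen (embQ '' weightsAvoiding ℬ p) :=
  coneGen_mono <| Set.image_mono fun _ ⟨f, hf, hfp⟩ => ⟨φ f, h.map_mem hf, hfp⟩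

end IsASTV

theorem mul_ne_zero_on_GIT_cone_general
    (k : Type) [Field k] {n : ℕ}
    (A : Type) [CommRing A] [Algebra k A]
    (𝒜 : (Fin n → ℤ) → Submodule k A) [GradedAlgebra 𝒜]
    (hfg : Algebra.FiniteType k A)
    (B : Type) [CommRing B] [Algebra k B]
    (ℬ : (Fin n → ℤ) → Submodule k B) [GradedAlgebra ℬ]
    (φ : A →ₐ[k] B) (hastv : IsASTV 𝒜 ℬ φ)
    (ψ χ χ' : Fin n → ℤ) (hψ : ψ ∈ satWeightSet 𝒜)
    (hχ : embQ χ ∈ GITCone 𝒜 ψ) (hχ' : embQ χ' ∈ GITCone 𝒜 ψ)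
    (b b' : B) (hb : b ∈ ℬ χ) (hb0 : b ≠ 0) (hb' : b' ∈ ℬ χ') (hb'0 : b' ≠ 0) :
    b * b' ≠ 0 := by
  have hint := hastv.finite.to_isIntegral
  have : IsReduced B := hastv.1
  have : IsJacobsonRing A := isJacobsonRing_of_finiteType (A := k)
  have : IsJacobsonRing B := isJacobsonRing_of_isIntegral' _ hint
  obtain ⟨x, hx, hx0⟩ := hastv.exists_mem_ne_zero hψ
  obtain ⟨M, hM, hxM⟩ := Ideal.exists_isMaximal_notMem_of_ne_zero hx0
  obtain ⟨m, hm, a, ha, haM⟩ :=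
    hastv.gradedRingHom.exists_map_notMem_of_isIntegralElem hx (hint x) hxM
  have hψM : embQ ψ ∈ orbitCone 𝒜 (M.comap φ) := embQ_mem_orbitCone_of_nsmul hm ha haM
  have hgood : ∀ τ, embQ τ ∈ GITCone 𝒜 ψ → τ ∈ weightsAvoiding ℬ M := fun τ hτ =>
    AddSubmonoid.mem_of_embQ_mem_coneGen hastv.mem_weightsAvoiding_of_nsmul_mem
      (hastv.orbitCone_comap_subset (Set.mem_iInter₂.mp hτ _
        ⟨Ideal.isMaximal_comap_of_isIntegral_of_isMaximal' _ hint M, hψM⟩))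
  intro h0
  exact hM.isPrime.mul_notMem (hastv.notMem_of_mem_weightsAvoiding (hgood χ hχ) hb hb0)
    (hastv.notMem_of_mem_weightsAvoiding (hgood χ' hχ') hb' hb'0) (h0 ▸ M.zero_mem)

/-- for an affine stable toric variety `(B, φ)` over `A`, `ψ ∈ Σ̂_A`, and
lattice points `χ, χ'` of the GIT-cone `σ_ψ`, the multiplication map
`B_χ ⊗ B_{χ'} → B_{χ+χ'}` is an isomorphism of one-dimensional spaces; equivalently the
product of nonzero homogeneous elements of degrees `χ`, `χ'` is nonzero. -/
theorem mul_ne_zero_on_GIT_cone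
    (k : Type) [Field k] [IsAlgClosed k] [CharZero k] {n : ℕ}
    (A : Type) [CommRing A] [IsDomain A] [Algebra k A]
    (𝒜 : (Fin n → ℤ) → Submodule k A) [GradedAlgebra 𝒜]
    (hfg : Algebra.FiniteType k A)
    (B : Type) [CommRing B] [Algebra k B]
    (ℬ : (Fin n → ℤ) → Submodule k B) [GradedAlgebra ℬ]
    (φ : A →ₐ[k] B) (hastv : IsASTV 𝒜 ℬ φ)
    (ψ χ χ' : Fin n → ℤ) (hψ : ψ ∈ satWeightSet 𝒜)
    (hχ : embQ χ ∈ GITCone 𝒜 ψ) (hχ' : embQ χ' ∈ GITCone 𝒜 ψ)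
    (b b' : B) (hb : b ∈ ℬ χ) (hb0 : b ≠ 0) (hb' : b' ∈ ℬ χ') (hb'0 : b' ≠ 0) :
    b * b' ≠ 0 :=
  mul_ne_zero_on_GIT_cone_general k A 𝒜 hfg B ℬ φ hastv ψ χ χ' hψ hχ hχ' b b' hb hb0 hb' hb'0
end

section
/- Let (B, φ) be an affine stable toric variety over A. Then the group Γ of graded k-algebra automorphisms ψ of B satisfying ψ ∘ φ = φ (equivalently, ψ fixes the image of φ pointwise) is a finite group. -/
/-! Graded pieces of `B` are at most one-dimensional, so a graded automorphism `ψ` acts on a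
nonzero homogeneous `g` by a scalar `c`. As `B` is finite over `A`, `g` satisfies a monic equation
`p(g) = 0` over `A`; applying `ψ`, which fixes `A`, and then a linear form `ℓ` with
`ℓ(g ^ deg p) ≠ 0` (possible since `B` is reduced) shows that `c` is a root of a nonzero polynomial
not depending on `ψ`. Being `A`-linear, `ψ` is determined by these scalars on the finitely many
homogeneous components of a finite set of `A`-module generators of `B`. -/

open Polynomial

theorem finite_setOf_smul_eq_of_isIntegral {k R B : Type*} [Field k] [CommRing R] [CommRing B]
    [Algebra k B] [Algebra R B] {g : B} (hg : IsIntegral R g)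
    (hnil : ¬IsNilpotent g) :
    {c : k | ∃ ψ : B →ₐ[k] B, (∀ r, ψ (algebraMap R B r) = algebraMap R B r) ∧
      ψ g = c • g}.Finite := by
  obtain ⟨p, hmonic, hp⟩ := hg
  obtain ⟨ℓ, hℓ⟩ : ∃ ℓ : Module.Dual k B, ℓ (g ^ p.natDegree) ≠ 0 :=
    Module.Projective.exists_dual_ne_zero k fun h => hnil ⟨_, h⟩
  let q : k[X] := ∑ i ∈ Finset.range (p.natDegree + 1), monomial i (ℓ (p.coeff i • g ^ i))
  have hq : q ≠ 0 := by
    intro h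
    apply hℓ
    simpa [q, finsetSum_coeff, coeff_monomial, hmonic.coeff_natDegree] using
      congr_arg (coeff · p.natDegree) h
  refine (finite_setOfPred_isRoot hq).subset ?_
  rintro c ⟨ψ, hψR, hψg⟩
  have hψ : ∀ i, ψ (p.coeff i • g ^ i) = c ^ i • (p.coeff i • g ^ i) := by
    intro i
    rw [Algebra.smul_def, map_mul, hψR, map_pow, hψg, _root_.smul_pow, mul_smul_comm]
  calc q.eval c = ℓ (∑ i ∈ Finset.range (p.natDegree + 1), c ^ i • (p.coeff i • g ^ i)) := by
        simp [q, eval_finsetSum, mul_comm]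
    _ = ℓ (ψ (aeval g p)) := by simp only [aeval_eq_sum_range, map_sum, hψ]
    _ = 0 := by rw [aeval_def, hp, map_zero, map_zero]

theorem AlgHom.eq_of_eqOn_of_span_eq_top {k R B C : Type*} [CommSemiring k] [CommSemiring R]
    [Semiring B] [Semiring C] [Algebra k B] [Algebra k C] [Algebra R B] [Algebra R C]
    {ψ₁ ψ₂ : B →ₐ[k] C}
    (h₁ : ∀ r, ψ₁ (algebraMap R B r) = algebraMap R C r)
    (h₂ : ∀ r, ψ₂ (algebraMap R B r) = algebraMap R C r)
    {G : Set B} (hG : Submodule.span R G = ⊤) (h : Set.EqOn ψ₁ ψ₂ G) : ψ₁ = ψ₂ := by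
  let toLinearMap (ψ : B →ₐ[k] C) (hψ : ∀ r, ψ (algebraMap R B r) = algebraMap R C r) :
      B →ₗ[R] C :=
    { toFun := ψ
      map_add' := map_add ψ
      map_smul' := fun r b => by simp [Algebra.smul_def, hψ] }
  ext b
  exact LinearMap.congr_fun (LinearMap.ext_on hG (f := toLinearMap ψ₁ h₁)
    (g := toLinearMap ψ₂ h₂) h) b

theorem DirectSum.Decomposition.exists_finset_isHomogeneousElem_span {ι M σ : Type*}
    [DecidableEq ι] [AddCommMonoid M] [SetLike σ M] [AddSubmonoidClass σ M] (ℳ : ι → σ)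
    [DirectSum.Decomposition ℳ] (R : Type*) [Semiring R] [Module R M] (s : Finset M) :
    ∃ G : Finset M, (∀ g ∈ G, SetLike.IsHomogeneousElem ℳ g) ∧
      Submodule.span R (s : Set M) ≤ Submodule.span R G := by
  classical
  refine ⟨s.biUnion fun x => (decompose ℳ x).support.image fun i => (decompose ℳ x i : M),
    ?_, Submodule.span_le.2 fun x hx => ?_⟩
  · simp only [Finset.mem_biUnion, Finset.mem_image]
    rintro _ ⟨x, -, i, -, rfl⟩
    exact ⟨i, SetLike.coe_mem _⟩
  · rw [← sum_support_decompose ℳ x]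
    refine Submodule.sum_mem _ fun i hi => Submodule.subset_span ?_
    exact Finset.mem_biUnion.2 ⟨x, hx, Finset.mem_image_of_mem _ hi⟩

theorem Set.Finite.of_injOn_eval {F α β : Type*} [FunLike F α β] {S : Set F} {G : Set α}
    (hG : G.Finite) (hinj : S.InjOn fun f (g : G) => f g)
    (hvalues : ∀ g ∈ G, ((fun f : F => f g) '' S).Finite) : S.Finite := by
  have : Finite G := hG
  refine Set.Finite.of_finite_image ((Set.Finite.pi fun g : G => hvalues g g.2).subset ?_) hinj
  rintro _ ⟨f, hf, rfl⟩ g -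
  exact ⟨f, hf, rfl⟩

theorem IsASTV.exists_smul_eq_s10 {k : Type} [Field k] {n : ℕ} {A : Type} [CommRing A]
    [Algebra k A] {𝒜 : (Fin n → ℤ) → Submodule k A} {B : Type} [CommRing B] [Algebra k B]
    {ℬ : (Fin n → ℤ) → Submodule k B} {φ : A →ₐ[k] B} (h : IsASTV 𝒜 ℬ φ) {χ : Fin n → ℤ}
    {g y : B} (hg : g ∈ ℬ χ) (hg0 : g ≠ 0) (hy : y ∈ ℬ χ) : ∃ c : k, y = c • g := by
  obtain ⟨-, -, hdim, hbot, -⟩ := h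
  have hχ : χ ∈ satWeightSet 𝒜 := by
    by_contra hχ
    exact hg0 (by simpa [hbot χ hχ] using hg)
  obtain ⟨c, hc⟩ := (finrank_eq_one_iff_of_nonzero' (⟨g, hg⟩ : ℬ χ)
    (by simpa using hg0)).mp (hdim χ hχ) ⟨y, hy⟩
  exact ⟨c, congr_arg Subtype.val hc.symm⟩

theorem automorphism_group_finite_general
    (k : Type) [Field k] {n : ℕ}
    (A : Type) [CommRing A] [Algebra k A]
    (𝒜 : (Fin n → ℤ) → Submodule k A)
    (B : Type) [CommRing B] [Algebra k B]
    (ℬ : (Fin n → ℤ) → Submodule k B) [GradedAlgebra ℬ]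
    (φ : A →ₐ[k] B) (hastv : IsASTV 𝒜 ℬ φ) :
    {ψ : B ≃ₐ[k] B |
      (∀ (χ : Fin n → ℤ) (b : B), b ∈ ℬ χ → ψ b ∈ ℬ χ) ∧
      (∀ a : A, ψ (φ a) = φ a)}.Finite := by
  let : Algebra A B := φ.toAlgebra
  obtain ⟨s, hs⟩ := hastv.2.2.2.2
  have hspan : Submodule.span A (s : Set B) = ⊤ := by
    refine eq_top_iff.2 fun b _ => ?_
    obtain ⟨c, rfl⟩ := hs b
    exact Submodule.sum_mem _ fun x hx => Submodule.smul_mem _ (c x) (Submodule.subset_span hx)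
  have : Module.Finite A B := ⟨⟨s, hspan⟩⟩
  obtain ⟨G, hGhom, hsG⟩ := DirectSum.Decomposition.exists_finset_isHomogeneousElem_span ℬ A s
  refine Set.Finite.of_injOn_eval G.finite_toSet ?_ fun g hg => ?_
  · rintro ψ₁ ⟨-, h₁⟩ ψ₂ ⟨-, h₂⟩ h
    refine AlgEquiv.coe_toAlgHom_injective (AlgHom.eq_of_eqOn_of_span_eq_top h₁ h₂ ?_
      fun g hg => congr_fun h ⟨g, hg⟩)
    exact top_unique (hspan ▸ hsG)
  obtain ⟨χ, hgχ⟩ := hGhom g hg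
  rcases eq_or_ne g 0 with rfl | hg0
  · exact (Set.finite_singleton 0).subset (by rintro _ ⟨ψ, -, rfl⟩; exact map_zero ψ)
  have hnil : ¬IsNilpotent g := fun h => hg0 (hastv.1.eq_zero g h)
  refine ((finite_setOf_smul_eq_of_isIntegral (Algebra.IsIntegral.isIntegral (R := A) g)
    hnil).image fun c : k => c • g).subset ?_
  rintro _ ⟨ψ, ⟨hgr, hfix⟩, rfl⟩
  obtain ⟨c, hc⟩ := hastv.exists_smul_eq_s10 hgχ hg0 (hgr χ g hgχ)
  exact ⟨c, ⟨ψ, hfix, hc⟩, hc.symm⟩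

/-- the group of graded `k`-algebra automorphisms of an affine stable toric
variety `(B, φ)` over `A` fixing the image of `φ` pointwise is finite. -/
theorem automorphism_group_finite
    (k : Type) [Field k] [IsAlgClosed k] [CharZero k] {n : ℕ}
    (A : Type) [CommRing A] [IsDomain A] [Algebra k A]
    (𝒜 : (Fin n → ℤ) → Submodule k A) [GradedAlgebra 𝒜]
    (hfg : Algebra.FiniteType k A)
    (B : Type) [CommRing B] [Algebra k B]
    (ℬ : (Fin n → ℤ) → Submodule k B) [GradedAlgebra ℬ]
    (φ : A →ₐ[k] B) (hastv : IsASTV 𝒜 ℬ φ) :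
    {ψ : B ≃ₐ[k] B |
      (∀ (χ : Fin n → ℤ) (b : B), b ∈ ℬ χ → ψ b ∈ ℬ χ) ∧
      (∀ a : A, ψ (φ a) = φ a)}.Finite :=
  automorphism_group_finite_general k A 𝒜 B ℬ φ hastv
end

section
/- There exists a positive integer N, depending only on A, such that for every affine stable toric variety (B, φ) over A and every graded k-algebra automorphism ψ of B with ψ ∘ φ = φ, one has ψ^N = id_B. -/
/-!
Each graded piece `B_χ` is at most a line, so a graded automorphism `ψ` acts on it by a scalar
`c_χ`, and `c_μ = 1` as soon as `φ` maps some `a ∈ A_μ` to a nonzero element. Given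
`0 ≠ x ∈ B_χ`, pick a prime `P ∌ x` (`B` is reduced) and put `Q = φ⁻¹ P`. Projecting an
integral equation of `x` over `A` to degree `mχ` shows that a positive multiple of `χ` lies in
the monoid `M_Q` of weights of homogeneous elements outside `Q`. If `N` kills the saturation of
the lattice `ℤ M_Q` modulo `ℤ M_Q`, then `Nχ = u - v` with `u, v ∈ M_Q`, and letting `ψ` act on
`x ^ N φ(a_v) ∈ B_u \ P` gives `c_χ ^ N = 1`. Since `M_Q` is generated by the weights of the
homogeneous generators of `A` outside `Q`, only finitely many lattices occur, and one `N` serves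
for all of them.
-/

theorem Submodule.exists_pos_nsmul_mem_of_nsmul_mem {M : Type*} [AddCommGroup M]
    [IsNoetherian ℤ M] (H : Submodule ℤ M) :
    ∃ N : ℕ, 0 < N ∧ ∀ (x : M) (m : ℕ), 0 < m → m • x ∈ H → N • x ∈ H := by
  let T := Submodule.torsion ℤ (M ⧸ H)
  have : Finite T := Module.finite_of_fg_torsion T Submodule.torsion_isTorsion
  refine ⟨AddMonoid.exponent T, Nat.pos_of_ne_zero AddMonoid.exponent_ne_zero_of_finite,
    fun x m hm hx => ?_⟩
  have hxT : H.mkQ x ∈ T := by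
    refine (Submodule.mem_torsion_iff _).2 ⟨⟨m, mem_nonZeroDivisors_of_ne_zero (by omega)⟩, ?_⟩
    rwa [Submonoid.mk_smul, natCast_zsmul, ← map_nsmul, Submodule.mkQ_apply,
      Submodule.Quotient.mk_eq_zero]
  have := congrArg Subtype.val (AddMonoid.exponent_nsmul_eq_zero (⟨_, hxT⟩ : T))
  rwa [AddSubmonoidClass.coe_nsmul, ZeroMemClass.coe_zero, ← map_nsmul, Submodule.mkQ_apply,
    Submodule.Quotient.mk_eq_zero] at this

theorem Submodule.exists_pos_nsmul_mem_of_nsmul_mem_of_finite {M κ : Type*} [AddCommGroup M]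
    [IsNoetherian ℤ M] [Finite κ] (H : κ → Submodule ℤ M) :
    ∃ N : ℕ, 0 < N ∧ ∀ (i : κ) (x : M) (m : ℕ), 0 < m → m • x ∈ H i → N • x ∈ H i := by
  have := Fintype.ofFinite κ
  choose N hN hNH using fun i => (H i).exists_pos_nsmul_mem_of_nsmul_mem
  refine ⟨∏ i, N i, Finset.prod_pos fun i _ => hN i, fun i x m hm hx => ?_⟩
  obtain ⟨q, hq⟩ := Finset.dvd_prod_of_mem N (Finset.mem_univ i)
  rw [hq, mul_nsmul]
  exact (H i).smul_of_tower_mem q (hNH i x m hm hx)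

theorem AddSubmonoid.exists_sub_eq_of_mem_span_int {M : Type*} [AddCommGroup M]
    (S : AddSubmonoid M) {x : M} (hx : x ∈ Submodule.span ℤ (S : Set M)) :
    ∃ u ∈ S, ∃ v ∈ S, u - v = x := by
  rw [← Submodule.mem_toAddSubgroup, Submodule.span_int_eq_addSubgroupClosure] at hx
  induction hx using AddSubgroup.closure_induction with
  | mem x hx => exact ⟨x, hx, 0, S.zero_mem, sub_zero x⟩
  | zero => exact ⟨0, S.zero_mem, 0, S.zero_mem, sub_zero 0⟩
  | add x y _ _ hx hy =>
    obtain ⟨u, hu, v, hv, rfl⟩ := hx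
    obtain ⟨u', hu', v', hv', rfl⟩ := hy
    exact ⟨u + u', S.add_mem hu hu', v + v', S.add_mem hv hv', by abel⟩
  | neg x _ hx =>
    obtain ⟨u, hu, v, hv, rfl⟩ := hx
    exact ⟨v, hv, u, hu, (neg_sub u v).symm⟩

section OrbitMonoid

variable {ι A σ : Type*} [DecidableEq ι] [CommRing A] [SetLike σ A] [AddSubgroupClass σ A]

/-- `orbitCone 𝒜 Q` is the cone generated by this monoid. -/
def orbitMonoid [AddCommMonoid ι] (𝒜 : ι → σ) [GradedRing 𝒜] (Q : Ideal A) [Q.IsPrime] :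
    AddSubmonoid ι where
  carrier := {μ | ∃ a ∈ 𝒜 μ, a ∉ Q}
  zero_mem' := ⟨1, SetLike.one_mem_graded 𝒜, (Ideal.ne_top_iff_one Q).1 Ideal.IsPrime.ne_top'⟩
  add_mem' := by
    rintro μ ν ⟨a, ha, haQ⟩ ⟨b, hb, hbQ⟩
    exact ⟨a * b, SetLike.mul_mem_graded ha hb,
      fun h => (Ideal.IsPrime.mem_or_mem ‹_› h).elim haQ hbQ⟩

theorem exists_pos_nsmul_mem_orbitMonoid_of_isIntegralElem [AddCancelCommMonoid ι]
    {𝒜 : ι → σ} [GradedRing 𝒜] {B τ : Type*} [CommRing B] [SetLike τ B] [AddSubgroupClass τ B]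
    {ℬ : ι → τ} [GradedRing ℬ] (φ : 𝒜 →+*ᵍ ℬ) (P : Ideal B) [P.IsPrime] {χ : ι} {b : B}
    (hb : b ∈ ℬ χ) (hbP : b ∉ P) (hint : φ.toRingHom.IsIntegralElem b) :
    ∃ m : ℕ, 0 < m ∧ m • χ ∈ orbitMonoid 𝒜 (P.comap φ.toRingHom) := by
  obtain ⟨p, hpm, hp⟩ := hint
  set d := p.natDegree
  by_contra! hout
  have hterm : ∀ i < d,
      (DirectSum.decompose ℬ (φ (p.coeff i) * b ^ i) (d • χ) : B) ∈ P := by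
    intro i hi
    have hdeg : d • χ = (d - i) • χ + i • χ := by rw [← add_smul, Nat.sub_add_cancel hi.le]
    rw [hdeg, DirectSum.coe_decompose_mul_add_of_right_mem ℬ (SetLike.pow_mem_graded i hb),
      ← φ.map_directSumDecompose]
    by_contra hP
    exact hout (d - i) (by omega) ⟨_, SetLike.coe_mem _, fun h => hP (P.mul_mem_right _ h)⟩
  have hsplit : b ^ d + ∑ i ∈ Finset.range d, φ (p.coeff i) * b ^ i = 0 := by
    rw [← hp, Polynomial.eval₂_eq_sum_range, Finset.sum_range_succ, hpm.coeff_natDegree,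
      map_one, one_mul, add_comm]
    rfl
  have hproj := congrArg (fun y => (DirectSum.decompose ℬ y (d • χ) : B)) hsplit
  simp only [DirectSum.decompose_add, DirectSum.decompose_sum, DirectSum.add_apply,
    DirectSum.sum_apply, AddMemClass.coe_add, AddSubmonoidClass.coe_finsetSum,
    DirectSum.decompose_of_mem_same ℬ (SetLike.pow_mem_graded d hb), DirectSum.decompose_zero,
    DirectSum.zero_apply, ZeroMemClass.coe_zero] at hproj
  refine hbP (Ideal.IsPrime.mem_of_pow_mem ‹_› d ?_)
  rw [eq_neg_of_add_eq_zero_left hproj]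
  exact P.neg_mem (P.sum_mem fun i hi => hterm i (Finset.mem_range.1 hi))

end OrbitMonoid

section GradedAlgebra

variable {ι k A : Type*} [DecidableEq ι] [AddCommMonoid ι] [CommRing k] [CommRing A] [Algebra k A]
  (𝒜 : ι → Submodule k A) [GradedAlgebra 𝒜]

theorem GradedAlgebra.exists_finset_adjoin_eq_top_and_mem [Algebra.FiniteType k A] :
    ∃ (s : Finset A) (deg : A → ι), Algebra.adjoin k (s : Set A) = ⊤ ∧ ∀ a ∈ s, a ∈ 𝒜 (deg a) := by
  classical
  obtain ⟨F, hF⟩ := Algebra.FiniteType.out (R := k) (A := A)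
  let s := F.biUnion fun a => (DirectSum.decompose 𝒜 a).support.image
    fun i => (DirectSum.decompose 𝒜 a i : A)
  have hhom : ∀ a ∈ s, ∃ i, a ∈ 𝒜 i := by
    simp only [s, Finset.mem_biUnion, Finset.mem_image]
    rintro _ ⟨a, -, i, -, rfl⟩
    exact ⟨i, SetLike.coe_mem _⟩
  choose! deg hdeg using hhom
  refine ⟨s, deg, top_le_iff.1 ?_, hdeg⟩
  rw [← hF, Algebra.adjoin_le_iff]
  intro a ha
  rw [← DirectSum.sum_support_decompose 𝒜 a]
  exact Subalgebra.sum_mem _ fun i hi => Algebra.subset_adjoin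
    (Finset.mem_biUnion.2 ⟨a, ha, Finset.mem_image_of_mem _ hi⟩)

theorem orbitMonoid_le_closure {s : Set A} (hs : Algebra.adjoin k s = ⊤) {deg : A → ι}
    (hdeg : ∀ a ∈ s, a ∈ 𝒜 (deg a)) (Q : Ideal A) [Q.IsPrime] :
    orbitMonoid 𝒜 Q ≤ AddSubmonoid.closure (deg '' {a ∈ s | a ∉ Q}) := by
  set M := AddSubmonoid.closure (deg '' {a ∈ s | a ∉ Q})
  have hmon : ∀ g ∈ Submonoid.closure s, ∃ ν, g ∈ 𝒜 ν ∧ (g ∉ Q → ν ∈ M) := by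
    intro g hg
    induction hg using Submonoid.closure_induction with
    | mem g hg =>
      exact ⟨deg g, hdeg g hg, fun hgQ => AddSubmonoid.subset_closure ⟨g, ⟨hg, hgQ⟩, rfl⟩⟩
    | one => exact ⟨0, SetLike.one_mem_graded 𝒜, fun _ => M.zero_mem⟩
    | mul g h _ _ ihg ihh =>
      obtain ⟨ν, hg, hν⟩ := ihg
      obtain ⟨ν', hh, hν'⟩ := ihh
      exact ⟨ν + ν', SetLike.mul_mem_graded hg hh, fun hgh => M.add_mem
        (hν fun h => hgh (Q.mul_mem_right _ h)) (hν' fun h => hgh (Q.mul_mem_left _ h))⟩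
  rintro μ ⟨a, ha, haQ⟩
  by_contra hμ
  have hspan : Submodule.span k (Submonoid.closure s : Set A) ≤
      (Q.restrictScalars k).comap (GradedAlgebra.proj 𝒜 μ) := by
    rw [Submodule.span_le]
    intro g hg
    obtain ⟨ν, hgν, hν⟩ := hmon g hg
    show (DirectSum.decompose 𝒜 g μ : A) ∈ Q
    by_cases h : ν = μ
    · subst h
      rw [DirectSum.decompose_of_mem_same 𝒜 hgν]
      by_contra hgQ
      exact hμ (hν hgQ)
    · rw [DirectSum.decompose_of_mem_ne 𝒜 hgν h]
      exact Q.zero_mem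
  have ha_span : a ∈ Submodule.span k (Submonoid.closure s : Set A) := by
    rw [← Algebra.adjoin_eq_span, hs]
    trivial
  have := hspan ha_span
  rw [Submodule.mem_comap, GradedAlgebra.proj_apply, DirectSum.decompose_of_mem_same 𝒜 ha] at this
  exact haQ this

end GradedAlgebra

theorem exists_pos_nsmul_mem_span_orbitMonoid {ι k A : Type*} [DecidableEq ι] [AddCommGroup ι]
    [IsNoetherian ℤ ι] [CommRing k] [CommRing A] [Algebra k A] (𝒜 : ι → Submodule k A)
    [GradedAlgebra 𝒜] [Algebra.FiniteType k A] :
    ∃ N : ℕ, 0 < N ∧ ∀ (Q : Ideal A) [Q.IsPrime] (χ : ι) (m : ℕ), 0 < m →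
      m • χ ∈ orbitMonoid 𝒜 Q → N • χ ∈ Submodule.span ℤ (orbitMonoid 𝒜 Q : Set ι) := by
  classical
  obtain ⟨s, deg, hs, hdeg⟩ := GradedAlgebra.exists_finset_adjoin_eq_top_and_mem 𝒜
  obtain ⟨N, hN, hsat⟩ := Submodule.exists_pos_nsmul_mem_of_nsmul_mem_of_finite
    fun t : s.powerset => Submodule.span ℤ (deg '' (t : Finset A))
  refine ⟨N, hN, fun Q _ χ m hm hχ => ?_⟩
  let t : s.powerset := ⟨s.filter (· ∉ Q), Finset.mem_powerset.2 (Finset.filter_subset _ _)⟩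
  have hspan : Submodule.span ℤ (orbitMonoid 𝒜 Q : Set ι) =
      Submodule.span ℤ (deg '' (t : Finset A)) := by
    rw [show ((t : Finset A) : Set A) = {a ∈ (s : Set A) | a ∉ Q} from Finset.coe_filter _ _]
    refine le_antisymm (Submodule.span_le.2 fun μ hμ => ?_) (Submodule.span_mono ?_)
    · exact AddSubmonoid.closure_le (S := (Submodule.span ℤ _).toAddSubmonoid).2
        Submodule.subset_span (orbitMonoid_le_closure 𝒜 hs hdeg Q hμ)
    · rintro _ ⟨a, ⟨ha, haQ⟩, rfl⟩
      exact ⟨a, hdeg a ha, haQ⟩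
  rw [hspan]
  exact hsat t χ m hm (hspan ▸ Submodule.subset_span hχ)

theorem RingHom.isIntegralElem_of_forall_eq_sum {R S : Type*} [CommRing R] [CommRing S]
    (f : R →+* S) (s : Finset S) (hs : ∀ b, ∃ c : S → R, b = ∑ x ∈ s, f (c x) * x) (b : S) :
    f.IsIntegralElem b := by
  let := f.toAlgebra
  have : Module.Finite R S := ⟨⟨s, top_unique fun b _ => by
    obtain ⟨c, rfl⟩ := hs b
    exact Submodule.sum_mem _ fun x hx => Submodule.smul_mem _ (c x) (Submodule.subset_span hx)⟩⟩
  exact Algebra.IsIntegral.isIntegral b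

theorem Submodule.exists_smul_eq_of_finrank_eq_one_s11 {K V : Type*} [DivisionRing K] [AddCommGroup V]
    [Module K V] (W : Submodule K V) (hW : Module.finrank K W = 1) {x y : V} (hx : x ∈ W)
    (hy : y ∈ W) (hx0 : x ≠ 0) : ∃ c : K, c • x = y := by
  obtain ⟨c, hc⟩ := (finrank_eq_one_iff_of_nonzero' (⟨x, hx⟩ : W) (by simpa using hx0)).1 hW ⟨y, hy⟩
  exact ⟨c, congrArg Subtype.val hc⟩

theorem AlgEquiv.pow_apply_eq_pow_smul {R B : Type*} [CommSemiring R] [Semiring B] [Algebra R B]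
    (ψ : B ≃ₐ[R] B) {x : B} {c : R} (h : ψ x = c • x) (N : ℕ) : (ψ ^ N) x = c ^ N • x := by
  induction N with
  | zero => simp
  | succ N ih => rw [pow_succ', AlgEquiv.mul_apply, ih, map_smul, h, smul_smul, pow_succ]

namespace IsASTV

variable {k : Type} [Field k] {n : ℕ} {A : Type} [CommRing A] [Algebra k A]
  {𝒜 : (Fin n → ℤ) → Submodule k A} {B : Type} [CommRing B] [Algebra k B]
  {ℬ : (Fin n → ℤ) → Submodule k B} {φ : A →ₐ[k] B}

theorem finrank_eq_one (h : IsASTV 𝒜 ℬ φ) {μ : Fin n → ℤ} {z : B} (hz : z ∈ ℬ μ) (hz0 : z ≠ 0) :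
    Module.finrank k (ℬ μ) = 1 := by
  refine h.2.2.1 μ (by_contra fun hμ => hz0 ?_)
  rwa [h.2.2.2.1 μ hμ, Submodule.mem_bot] at hz

theorem exists_apply_eq_smul (h : IsASTV 𝒜 ℬ φ) {ψ : B ≃ₐ[k] B}
    (hgr : ∀ (χ : Fin n → ℤ) (b : B), b ∈ ℬ χ → ψ b ∈ ℬ χ) {χ : Fin n → ℤ} {x : B}
    (hx : x ∈ ℬ χ) (hx0 : x ≠ 0) : ∃ c : k, ψ x = c • x := by
  obtain ⟨c, hc⟩ := (ℬ χ).exists_smul_eq_of_finrank_eq_one_s11 (h.finrank_eq_one hx hx0) hx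
    (hgr χ x hx) hx0
  exact ⟨c, hc.symm⟩

theorem apply_eq_self_of_mem (h : IsASTV 𝒜 ℬ φ) {ψ : B ≃ₐ[k] B} (hfix : ∀ a : A, ψ (φ a) = φ a)
    {μ : Fin n → ℤ} {a : A} (ha : a ∈ 𝒜 μ) (ha0 : φ a ≠ 0) {z : B} (hz : z ∈ ℬ μ) : ψ z = z := by
  have hφa := h.2.1 μ a ha
  obtain ⟨c, rfl⟩ := (ℬ μ).exists_smul_eq_of_finrank_eq_one_s11 (h.finrank_eq_one hφa ha0) hφa hz ha0
  rw [map_smul, hfix]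

theorem pow_eq_one_of_apply_eq_smul [GradedAlgebra 𝒜] [GradedAlgebra ℬ] (h : IsASTV 𝒜 ℬ φ)
    {ψ : B ≃ₐ[k] B} (hfix : ∀ a : A, ψ (φ a) = φ a) {N : ℕ}
    (hN : ∀ (Q : Ideal A) [Q.IsPrime] (χ : Fin n → ℤ) (m : ℕ), 0 < m →
      m • χ ∈ orbitMonoid 𝒜 Q → N • χ ∈ Submodule.span ℤ (orbitMonoid 𝒜 Q : Set (Fin n → ℤ)))
    {χ : Fin n → ℤ} {x : B} {c : k} (hx : x ∈ ℬ χ) (hx0 : x ≠ 0) (hψx : ψ x = c • x) :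
    c ^ N = 1 := by
  have := h.1
  obtain ⟨P, hP, hxP⟩ : ∃ P : Ideal B, P.IsPrime ∧ x ∉ P := by
    by_contra! hall
    exact hx0 (nilpotent_iff_mem_prime.2 hall).eq_zero
  let φg : 𝒜 →+*ᵍ ℬ := ⟨φ.toRingHom, fun hx => h.2.1 _ _ hx⟩
  obtain ⟨m, hm, hmχ⟩ := exists_pos_nsmul_mem_orbitMonoid_of_isIntegralElem φg P hx hxP
    (RingHom.isIntegralElem_of_forall_eq_sum _ _ h.2.2.2.2.choose_spec x)
  obtain ⟨u, ⟨au, hau, hauP⟩, v, ⟨av, hav, havP⟩, huv⟩ :=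
    (orbitMonoid 𝒜 _).exists_sub_eq_of_mem_span_int (hN _ χ m hm hmχ)
  have hy : x ^ N * φ av ∈ ℬ u := by
    rw [show u = N • χ + v by rw [← huv, sub_add_cancel]]
    exact SetLike.mul_mem_graded (SetLike.pow_mem_graded N hx) (h.2.1 _ _ hav)
  have hyP : x ^ N * φ av ∉ P := fun hyP =>
    (hP.mem_or_mem hyP).elim (fun hxN => hxP (hP.mem_of_pow_mem N hxN)) havP
  have hfixy : ψ (x ^ N * φ av) = x ^ N * φ av :=
    h.apply_eq_self_of_mem hfix hau (fun h0 => hauP (by simp [φg, h0])) hy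
  rw [map_mul, map_pow, hψx, hfix, smul_pow, smul_mul_assoc] at hfixy
  have hy0 : x ^ N * φ av ≠ 0 := fun h0 => hyP (by rw [h0]; exact P.zero_mem)
  exact smul_left_injective k hy0 (hfixy.trans (one_smul k _).symm)

end IsASTV

theorem automorphisms_uniformly_annihilated_general
    (k : Type) [Field k] {n : ℕ}
    (A : Type) [CommRing A] [Algebra k A]
    (𝒜 : (Fin n → ℤ) → Submodule k A) [GradedAlgebra 𝒜]
    (hfg : Algebra.FiniteType k A) :
    ∃ N : ℕ, 0 < N ∧
      ∀ (B : Type) [CommRing B] [Algebra k B]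
        (ℬ : (Fin n → ℤ) → Submodule k B) [GradedAlgebra ℬ] (φ : A →ₐ[k] B),
        IsASTV 𝒜 ℬ φ →
          ∀ ψ : B ≃ₐ[k] B,
            (∀ (χ : Fin n → ℤ) (b : B), b ∈ ℬ χ → ψ b ∈ ℬ χ) →
            (∀ a : A, ψ (φ a) = φ a) →
            ψ ^ N = 1 := by
  have := hfg
  obtain ⟨N, hN, hNsat⟩ := exists_pos_nsmul_mem_span_orbitMonoid 𝒜
  refine ⟨N, hN, fun B _ _ ℬ _ φ h ψ hgr hfix => AlgEquiv.ext fun x => ?_⟩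
  induction x using DirectSum.Decomposition.inductionOn ℬ with
  | zero => simp
  | homogeneous z =>
    by_cases hz0 : (z : B) = 0
    · simp [hz0]
    obtain ⟨c, hc⟩ := h.exists_apply_eq_smul hgr z.2 hz0
    rw [AlgEquiv.one_apply, ψ.pow_apply_eq_pow_smul hc,
      h.pow_eq_one_of_apply_eq_smul hfix hNsat z.2 hz0 hc, one_smul]
  | add x y hx hy => rw [map_add, hx, hy, map_add]

/-- there is a positive integer `N`, depending only on `(A, 𝒜)`, such that for
every affine stable toric variety `(B, φ)` over `A`, every graded `k`-algebra automorphism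
`ψ` of `B` fixing the image of `φ` pointwise satisfies `ψ^N = id`. -/
theorem automorphisms_uniformly_annihilated
    (k : Type) [Field k] [IsAlgClosed k] [CharZero k] {n : ℕ}
    (A : Type) [CommRing A] [IsDomain A] [Algebra k A]
    (𝒜 : (Fin n → ℤ) → Submodule k A) [GradedAlgebra 𝒜]
    (hfg : Algebra.FiniteType k A) :
    ∃ N : ℕ, 0 < N ∧
      ∀ (B : Type) [CommRing B] [Algebra k B]
        (ℬ : (Fin n → ℤ) → Submodule k B) [GradedAlgebra ℬ] (φ : A →ₐ[k] B),
        IsASTV 𝒜 ℬ φ →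
          ∀ ψ : B ≃ₐ[k] B,
            (∀ (χ : Fin n → ℤ) (b : B), b ∈ ℬ χ → ψ b ∈ ℬ χ) →
            (∀ a : A, ψ (φ a) = φ a) →
            ψ ^ N = 1 :=
  automorphisms_uniformly_annihilated_general k A 𝒜 hfg
end

section
/- Let Λ be a quasifan in ℚⁿ. Then the quasifan algebra k[Λ] is reduced, i.e., has no nonzero nilpotent elements. -/
/-- A convex cone in `ℚⁿ`: contains `0` and is closed under addition and under
multiplication by nonnegative rational scalars. -/
def IsCone {n : ℕ} (c : Set (Fin n → ℚ)) : Prop :=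
  (0 : Fin n → ℚ) ∈ c ∧ (∀ x ∈ c, ∀ y ∈ c, x + y ∈ c) ∧
    ∀ q : ℚ, 0 ≤ q → ∀ x ∈ c, q • x ∈ c

/-- `μ` is a face of the convex cone `c`: a convex subcone such that whenever a sum of two
elements of `c` lies in `μ`, both summands lie in `μ`. -/
def IsFace {n : ℕ} (μ c : Set (Fin n → ℚ)) : Prop :=
  IsCone μ ∧ μ ⊆ c ∧ ∀ x ∈ c, ∀ y ∈ c, x + y ∈ μ → x ∈ μ ∧ y ∈ μ

/-- A quasifan in `ℚⁿ`: a finite collection of convex cones, closed under passing to faces,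
such that the intersection of any two of its cones is a face of each of them. -/
def IsQuasifan {n : ℕ} (Λ : Set (Set (Fin n → ℚ))) : Prop :=
  Λ.Finite ∧ (∀ c ∈ Λ, IsCone c) ∧ (∀ c ∈ Λ, ∀ μ, IsFace μ c → μ ∈ Λ) ∧
    ∀ c ∈ Λ, ∀ c' ∈ Λ, IsFace (c ∩ c') c ∧ IsFace (c ∩ c') c'

/-- The lattice points of the support `|Λ| = ⋃₀ Λ` of a quasifan. -/
def QLat {n : ℕ} (Λ : Set (Set (Fin n → ℚ))) : Type :=
  {χ : Fin n → ℤ // embQ χ ∈ ⋃₀ Λ}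

theorem embQ_add {n : ℕ} (a b : Fin n → ℤ) : embQ (a + b) = embQ a + embQ b := by
  funext i; simp [embQ]

/-- If `χ₁` and `χ₂` lie (after embedding) in a common cone of the quasifan `Λ`, then
`χ₁ + χ₂` is a lattice point of the support of `Λ`. -/
theorem embQ_add_mem_support {n : ℕ} {Λ : Set (Set (Fin n → ℚ))} (hΛ : IsQuasifan Λ)
    {χ₁ χ₂ : Fin n → ℤ} (h : ∃ c ∈ Λ, embQ χ₁ ∈ c ∧ embQ χ₂ ∈ c) :
    embQ (χ₁ + χ₂) ∈ ⋃₀ Λ := by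
  obtain ⟨c, hc, h1, h2⟩ := h
  exact ⟨c, hc, (embQ_add χ₁ χ₂) ▸ (hΛ.2.1 c hc).2.1 _ h1 _ h2⟩

theorem isReduced_of_map_mul_of_separating {ι R S F : Type*} [MonoidWithZero R]
    [MonoidWithZero S] [IsReduced S] [FunLike F R S] [ZeroHomClass F R S] (f : ι → F)
    (map_mul : ∀ i a b, f i (a * b) = f i a * f i b) (separating : ∀ a, (∀ i, f i a = 0) → a = 0) :
    IsReduced R :=
  (isReduced_iff_pow_one_lt 2 one_lt_two).2 fun a ha => separating a fun i =>
    IsReduced.eq_zero _ ⟨2, by rw [sq, ← map_mul, ← sq, ha, map_zero]⟩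

theorem LinearMap.map_mul_of_map_mul_basis {ι R A B : Type*} [CommSemiring R]
    [NonUnitalNonAssocSemiring A] [Module R A] [SMulCommClass R A A] [IsScalarTower R A A]
    [NonUnitalNonAssocSemiring B] [Module R B] [SMulCommClass R B B] [IsScalarTower R B B]
    (b : Module.Basis ι R A) (f : A →ₗ[R] B) (h : ∀ i j, f (b i * b j) = f (b i) * f (b j))
    (a a' : A) : f (a * a') = f a * f a' := by
  have : (LinearMap.mul R A).compr₂ f = (LinearMap.mul R B).compl₁₂ f f :=
    LinearMap.ext_basis b b h
  exact LinearMap.congr_fun₂ this a a'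

theorem IsQuasifan.add_mem_iff {n : ℕ} {Λ : Set (Set (Fin n → ℚ))} (hΛ : IsQuasifan Λ)
    {σ τ : Set (Fin n → ℚ)} (hσ : σ ∈ Λ) (hτ : τ ∈ Λ) {u v : Fin n → ℚ} (hu : u ∈ τ) (hv : v ∈ τ) :
    u + v ∈ σ ↔ u ∈ σ ∧ v ∈ σ := by
  refine ⟨fun huv => ?_, fun ⟨hu', hv'⟩ => (hΛ.2.1 σ hσ).2.1 u hu' v hv'⟩
  obtain ⟨⟨hu', -⟩, hv', -⟩ :=
    (hΛ.2.2.2 σ hσ τ hτ).2.2.2 u hu v hv ⟨huv, (hΛ.2.1 τ hτ).2.1 u hu v hv⟩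
  exact ⟨hu', hv'⟩

section ConeRestriction

variable {n : ℕ} {k : Type*} [CommSemiring k] {Λ : Set (Set (Fin n → ℚ))} {C : Type*}
  [Semiring C] [Algebra k C] (x : Module.Basis (QLat Λ) k C) (σ : Set (Fin n → ℚ))

open Classical AddMonoidAlgebra

noncomputable def coneRestriction : C →ₗ[k] AddMonoidAlgebra k (Fin n → ℤ) :=
  x.constr k fun χ => if embQ χ.1 ∈ σ then single χ.1 1 else 0

theorem coneRestriction_basis (χ : QLat Λ) :
    coneRestriction x σ (x χ) = if embQ χ.1 ∈ σ then single χ.1 1 else 0 :=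
  x.constr_basis k _ χ

theorem coeff_coneRestriction {χ : QLat Λ} (hχ : embQ χ.1 ∈ σ) (a : C) :
    (coneRestriction x σ a).coeff χ.1 = x.repr a χ := by
  have : (Finsupp.lapply χ.1 ∘ₗ (coeffLinearEquiv k).toLinearMap) ∘ₗ coneRestriction x σ =
      x.coord χ := x.ext fun ψ => by
    rcases eq_or_ne ψ χ with rfl | hne
    · simp [coneRestriction_basis, hχ, coeff_single]
    · have hne' : ψ.1 ≠ χ.1 := mt Subtype.ext hne
      simp [coneRestriction_basis, coeff_single, hne, hne', apply_ite]
  exact LinearMap.congr_fun this a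

variable {x σ}

theorem coneRestriction_mul (hΛ : IsQuasifan Λ)
    (hmul : ∀ (χ₁ χ₂ : QLat Λ) (h : ∃ c ∈ Λ, embQ χ₁.1 ∈ c ∧ embQ χ₂.1 ∈ c),
      x χ₁ * x χ₂ = x ⟨χ₁.1 + χ₂.1, embQ_add_mem_support hΛ h⟩)
    (hmul0 : ∀ χ₁ χ₂ : QLat Λ, (¬ ∃ c ∈ Λ, embQ χ₁.1 ∈ c ∧ embQ χ₂.1 ∈ c) →
      x χ₁ * x χ₂ = 0)
    (hσ : σ ∈ Λ) (a b : C) :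
    coneRestriction x σ (a * b) = coneRestriction x σ a * coneRestriction x σ b := by
  refine LinearMap.map_mul_of_map_mul_basis x _ (fun χ₁ χ₂ => ?_) a b
  by_cases hcommon : ∃ τ ∈ Λ, embQ χ₁.1 ∈ τ ∧ embQ χ₂.1 ∈ τ
  · rw [hmul χ₁ χ₂ hcommon, coneRestriction_basis, coneRestriction_basis,
      coneRestriction_basis x σ ⟨χ₁.1 + χ₂.1, embQ_add_mem_support hΛ hcommon⟩]
    obtain ⟨τ, hτ, h₁, h₂⟩ := hcommon
    have hsum := hΛ.add_mem_iff hσ hτ h₁ h₂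
    rw [← embQ_add] at hsum
    split_ifs <;> simp_all [single_mul_single]
  · have : ¬(embQ χ₁.1 ∈ σ ∧ embQ χ₂.1 ∈ σ) := fun h => hcommon ⟨σ, hσ, h⟩
    rw [hmul0 χ₁ χ₂ hcommon, map_zero]
    simp only [coneRestriction_basis]
    split_ifs <;> simp_all

theorem eq_zero_of_forall_coneRestriction_eq_zero {a : C}
    (ha : ∀ σ ∈ Λ, coneRestriction x σ a = 0) : a = 0 := by
  refine x.repr.map_eq_zero_iff.1 (Finsupp.ext fun χ => ?_)
  obtain ⟨σ, hσ, hχ⟩ := χ.2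
  rw [← coeff_coneRestriction x σ hχ, ha σ hσ]
  rfl

end ConeRestriction

theorem quasifan_algebra_isReduced_general {n : ℕ} (k : Type) [Field k]
    (Λ : Set (Set (Fin n → ℚ))) (hΛ : IsQuasifan Λ)
    (C : Type) [CommRing C] [Algebra k C] (x : Module.Basis (QLat Λ) k C)
    (hmul : ∀ (χ₁ χ₂ : QLat Λ) (h : ∃ c ∈ Λ, embQ χ₁.1 ∈ c ∧ embQ χ₂.1 ∈ c),
      x χ₁ * x χ₂ = x ⟨χ₁.1 + χ₂.1, embQ_add_mem_support hΛ h⟩)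
    (hmul0 : ∀ χ₁ χ₂ : QLat Λ, (¬ ∃ c ∈ Λ, embQ χ₁.1 ∈ c ∧ embQ χ₂.1 ∈ c) →
      x χ₁ * x χ₂ = 0) :
    IsReduced C :=
  isReduced_of_map_mul_of_separating (fun σ : Λ => coneRestriction x σ.1)
    (fun σ => coneRestriction_mul hΛ hmul hmul0 σ.2)
    (fun _ ha => eq_zero_of_forall_coneRestriction_eq_zero fun σ hσ => ha ⟨σ, hσ⟩)

/-- the quasifan algebra `k[Λ]` of a quasifan `Λ` in `ℚⁿ` — presented as any
commutative `k`-algebra `C` with a basis `(x^χ)` indexed by the lattice points of `|Λ|`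
satisfying the quasifan multiplication rule — is reduced. -/
theorem quasifan_algebra_isReduced {n : ℕ} (k : Type) [Field k]
    (Λ : Set (Set (Fin n → ℚ))) (hΛ : IsQuasifan Λ)
    (C : Type) [CommRing C] [Algebra k C] (x : Module.Basis (QLat Λ) k C)
    (hmul : ∀ (χ₁ χ₂ : QLat Λ) (h : ∃ c ∈ Λ, embQ χ₁.1 ∈ c ∧ embQ χ₂.1 ∈ c),
      x χ₁ * x χ₂ = x ⟨χ₁.1 + χ₂.1, embQ_add_mem_support hΛ h⟩)
    (hmul0 : ∀ χ₁ χ₂ : QLat Λ, (¬ ∃ c ∈ Λ, embQ χ₁.1 ∈ c ∧ embQ χ₂.1 ∈ c) →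
      x χ₁ * x χ₂ = 0)
    (hone : ∀ h0 : embQ (0 : Fin n → ℤ) ∈ ⋃₀ Λ, x ⟨0, h0⟩ = 1) :
    IsReduced C :=
  quasifan_algebra_isReduced_general k Λ hΛ C x hmul hmul0
end

section
/- Let k be a field of characteristic zero, let A be a finitely generated ℤⁿ-graded commutative k-algebra, and let χ ∈ ℤⁿ. Then the ray subalgebra A^{(χ)} = ⊕_{m≥0} A_{mχ} is a finitely generated k-algebra. -/
/-!
Choose finitely many homogeneous generators `x₁, …, x_r` of `A`, of degrees `d₁, …, d_r`.
Then `A_{mχ}` is spanned by the monomials `x^a` with `∑ aᵢ dᵢ = mχ`, so the ray subalgebra is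
generated by the monomials whose exponent lies in the monoid `{a ∈ ℕʳ | ∃ m, ∑ aᵢ dᵢ = mχ}`.
This monoid is the projection of `{(m, a) ∈ ℕ × ℕʳ | ∑ aᵢ dᵢ = mχ}`, which is finitely generated
(Gordan's lemma) because it is closed under differences: it is generated by its finitely many
minimal nonzero elements, finitely many by Dickson's lemma.
-/

open Set

section Gordan

variable {M : Type*} [AddCommMonoid M] [PartialOrder M] [IsOrderedCancelAddMonoid M]
  [CanonicallyOrderedAdd M] [WellQuasiOrderedLE M]

theorem AddSubmonoid.fg_of_mem_of_add_mem (S : AddSubmonoid M)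
    (hS : ∀ b ∈ S, ∀ c, b + c ∈ S → c ∈ S) : S.FG := by
  set minNonzero : Set M := {a | a ∈ S ∧ a ≠ 0 ∧ ∀ b ∈ S, b ≠ 0 → b ≤ a → b = a}
  have hfin : minNonzero.Finite :=
    IsAntichain.finite_of_wellQuasiOrdered
      (fun a ha b hb hab hle => hab (hb.2.2 a ha.1 ha.2.1 hle)) wellQuasiOrdered_le
  refine ⟨hfin.toFinset, ?_⟩
  rw [Finite.coe_toFinset]
  refine le_antisymm (closure_le.2 fun a ha => ha.1) fun a ha => ?_
  induction a using WellFoundedLT.induction with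
  | _ a ih =>
  by_cases ha0 : a = 0
  · exact ha0 ▸ zero_mem _
  by_cases hmin : ∀ b ∈ S, b ≠ 0 → b ≤ a → b = a
  · exact subset_closure ⟨ha, ha0, hmin⟩
  push Not at hmin
  obtain ⟨b, hb, hb0, hba, hne⟩ := hmin
  obtain ⟨c, rfl⟩ := exists_add_of_le hba
  have hc : c ∈ S := hS b hb c ha
  have hcb : c < b + c := lt_add_of_pos_left c (pos_iff_ne_zero.2 hb0)
  exact add_mem (ih b (lt_of_le_of_ne hba hne) hb) (ih c hcb hc)

theorem AddMonoidHom.eqLocusM_fg {N : Type*} [AddLeftCancelMonoid N] (f g : M →+ N) :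
    (f.eqLocusM g).FG :=
  AddSubmonoid.fg_of_mem_of_add_mem _ fun b hb c hbc => by
    rw [mem_eqLocusM] at hb hbc ⊢
    rw [map_add, map_add, hb] at hbc
    exact add_left_cancel hbc

end Gordan

section Ray

variable {σ ι : Type*} [Fintype σ]

def rayExponents [AddCommMonoid ι] (d : σ → ι) (χ : ι) : AddSubmonoid (σ → ℕ) where
  carrier := {a | ∃ m : ℕ, ∑ i, a i • d i = m • χ}
  zero_mem' := ⟨0, by simp⟩
  add_mem' := by
    rintro a b ⟨m, ha⟩ ⟨m', hb⟩
    exact ⟨m + m', by simp [add_smul, Finset.sum_add_distrib, ha, hb]⟩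

theorem rayExponents_fg [AddCancelCommMonoid ι] (d : σ → ι) (χ : ι) :
    (rayExponents d χ).FG := by
  let weight : ℕ × (σ → ℕ) →+ ι :=
    (Fintype.linearCombination ℕ d).toAddMonoidHom.comp (AddMonoidHom.snd ℕ (σ → ℕ))
  let height : ℕ × (σ → ℕ) →+ ι := (multiplesHom ι χ).comp (AddMonoidHom.fst ℕ (σ → ℕ))
  have : rayExponents d χ = (weight.eqLocusM height).map (AddMonoidHom.snd ℕ (σ → ℕ)) := by
    ext a
    simp [rayExponents, weight, height, Fintype.linearCombination_apply]
  exact this ▸ (weight.eqLocusM_fg height).map _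

def prodPow {A : Type*} [CommMonoid A] (x : σ → A) (a : σ → ℕ) : A :=
  ∏ i, x i ^ a i

theorem prodPow_zero {A : Type*} [CommMonoid A] (x : σ → A) : prodPow x 0 = 1 := by
  simp [prodPow]

theorem prodPow_add {A : Type*} [CommMonoid A] (x : σ → A) (a b : σ → ℕ) :
    prodPow x (a + b) = prodPow x a * prodPow x b := by
  simp only [prodPow, Pi.add_apply, pow_add, Finset.prod_mul_distrib]

theorem Algebra.adjoin_image_prodPow_closure {R A : Type*} [CommSemiring R] [CommSemiring A]
    [Algebra R A] (x : σ → A) (G : Set (σ → ℕ)) :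
    adjoin R (prodPow x '' AddSubmonoid.closure G) = adjoin R (prodPow x '' G) := by
  refine le_antisymm (adjoin_le ?_) (adjoin_mono (image_mono AddSubmonoid.subset_closure))
  rintro _ ⟨a, ha, rfl⟩
  induction ha using AddSubmonoid.closure_induction with
  | mem a ha => exact subset_adjoin (mem_image_of_mem _ ha)
  | zero => exact prodPow_zero x ▸ one_mem _
  | add a b _ _ ha hb => exact prodPow_add x a b ▸ mul_mem ha hb

end Ray

section Graded

variable {R A ι : Type*} [CommSemiring R] [CommSemiring A] [Algebra R A] [DecidableEq ι]
  [AddCommMonoid ι] (𝒜 : ι → Submodule R A) [GradedAlgebra 𝒜]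

theorem GradedAlgebra.exists_finset_adjoin_eq_top_and_homogeneous_of_finiteType
    [Algebra.FiniteType R A] :
    ∃ s : Finset A, Algebra.adjoin R (s : Set A) = ⊤ ∧
      ∀ x ∈ s, SetLike.IsHomogeneousElem 𝒜 x := by
  classical
  obtain ⟨t, ht⟩ := Algebra.FiniteType.out (R := R) (A := A)
  refine ⟨t.biUnion fun y => (DirectSum.decompose 𝒜 y).support.image
    fun i => (DirectSum.decompose 𝒜 y i : A), ?_, ?_⟩
  · rw [← top_le_iff, ← ht, Algebra.adjoin_le_iff]
    intro y hy
    rw [← DirectSum.sum_support_decompose 𝒜 y]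
    exact sum_mem fun i hi =>
      Algebra.subset_adjoin (by simpa using ⟨y, hy, i, DFinsupp.mem_support_iff.1 hi, rfl⟩)
  · simp only [Finset.mem_biUnion, Finset.mem_image]
    rintro _ ⟨y, -, i, -, rfl⟩
    exact ⟨i, (DirectSum.decompose 𝒜 y i).2⟩

def raySubalgebra (χ : ι) : Subalgebra R A :=
  (⨆ m : ℕ, 𝒜 (m • χ)).toSubalgebra
    (Submodule.mem_iSup_of_mem 0 (by simpa using SetLike.one_mem_graded 𝒜))
    fun x y hx hy => by
      refine Submodule.iSup_induction _ (motive := (· * y ∈ _)) hx (fun m x hx => ?_)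
        (by simp) fun _ _ h h' => by simpa [add_mul] using add_mem h h'
      refine Submodule.iSup_induction _ (motive := (x * · ∈ _)) hy (fun m' y hy => ?_)
        (by simp) fun _ _ h h' => by simpa [mul_add] using add_mem h h'
      exact Submodule.mem_iSup_of_mem (m + m') (add_smul m m' χ ▸ SetLike.mul_mem_graded hx hy)

theorem raySubalgebra_toSubmodule (χ : ι) :
    Subalgebra.toSubmodule (raySubalgebra 𝒜 χ) = ⨆ m : ℕ, 𝒜 (m • χ) := rfl

variable {𝒜} {σ : Type*} [Fintype σ] {x : σ → A} {d : σ → ι}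

theorem prodPow_mem_graded (hx : ∀ i, x i ∈ 𝒜 (d i)) (a : σ → ℕ) :
    prodPow x a ∈ 𝒜 (∑ i, a i • d i) :=
  SetLike.prod_pow_mem_graded 𝒜 d x a fun i _ => hx i

theorem mem_span_prodPow_of_mem_graded (hx : ∀ i, x i ∈ 𝒜 (d i))
    (hgen : Algebra.adjoin R (range x) = ⊤) {j : ι} {y : A} (hy : y ∈ 𝒜 j) :
    y ∈ Submodule.span R (prodPow x '' {a | ∑ i, a i • d i = j}) := by
  have hy' : y ∈ Submodule.span R (Submonoid.closure (range x) : Set A) := by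
    rw [← Algebra.adjoin_eq_span, hgen]
    trivial
  rw [← DirectSum.decompose_of_mem_same 𝒜 hy, ← GradedAlgebra.proj_apply]
  refine (Submodule.map_span_le _ _ _).2 (fun z hz => ?_) (Submodule.mem_map_of_mem hy')
  obtain ⟨a, rfl⟩ : ∃ a, z = prodPow x a := Submonoid.exists_of_mem_closure_range _ _ hz
  rw [GradedAlgebra.proj_apply]
  by_cases hdeg : ∑ i, a i • d i = j
  · rw [DirectSum.decompose_of_mem_same 𝒜 (hdeg ▸ prodPow_mem_graded hx a)]
    exact Submodule.subset_span ⟨a, hdeg, rfl⟩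
  · rw [DirectSum.decompose_of_mem_ne 𝒜 (prodPow_mem_graded hx a) hdeg]
    exact zero_mem _

theorem raySubalgebra_eq_adjoin (hx : ∀ i, x i ∈ 𝒜 (d i))
    (hgen : Algebra.adjoin R (range x) = ⊤) (χ : ι) :
    raySubalgebra 𝒜 χ = Algebra.adjoin R (prodPow x '' rayExponents d χ) := by
  refine le_antisymm ?_ (Algebra.adjoin_le ?_)
  · rw [← Subalgebra.toSubmodule.le_iff_le, raySubalgebra_toSubmodule]
    refine iSup_le fun m y hy => Submodule.span_le.2 ?_ (mem_span_prodPow_of_mem_graded hx hgen hy)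
    rintro _ ⟨a, ha, rfl⟩
    exact Algebra.subset_adjoin ⟨a, ⟨m, ha⟩, rfl⟩
  · rintro _ ⟨a, ⟨m, ha⟩, rfl⟩
    exact Submodule.mem_iSup_of_mem m (ha ▸ prodPow_mem_graded hx a)

end Graded

theorem ray_subalgebra_finitely_generated_general
    (k : Type) [Field k] {n : ℕ}
    (A : Type) [CommRing A] [Algebra k A]
    (𝒜 : (Fin n → ℤ) → Submodule k A) [GradedAlgebra 𝒜]
    (hfg : Algebra.FiniteType k A) (χ : Fin n → ℤ) :
    ∃ s : Finset A,
      Subalgebra.toSubmodule (Algebra.adjoin k (s : Set A)) = ⨆ m : ℕ, 𝒜 (m • χ) := by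
  classical
  obtain ⟨t, ht, hhom⟩ :=
    GradedAlgebra.exists_finset_adjoin_eq_top_and_homogeneous_of_finiteType (R := k) 𝒜
  choose d hd using hhom
  obtain ⟨G, hG⟩ := rayExponents_fg (fun i : t => d i i.2) χ
  refine ⟨G.image (prodPow ((↑) : t → A)), ?_⟩
  rw [← raySubalgebra_toSubmodule, raySubalgebra_eq_adjoin (fun i : t => hd i i.2)
    (by rwa [Subtype.range_coe]), ← hG, Algebra.adjoin_image_prodPow_closure, Finset.coe_image]

/-- for a finitely generated `ℤⁿ`-graded commutative algebra `A` over a field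
`k` of characteristic zero and any `χ ∈ ℤⁿ`, the ray subalgebra `A^{(χ)} = ⊕_{m ≥ 0} A_{mχ}`
is a finitely generated `k`-algebra: there is a finite set whose generated `k`-subalgebra
has `⊕_{m ≥ 0} A_{mχ}` as underlying submodule. -/
theorem ray_subalgebra_finitely_generated
    (k : Type) [Field k] [CharZero k] {n : ℕ}
    (A : Type) [CommRing A] [Algebra k A]
    (𝒜 : (Fin n → ℤ) → Submodule k A) [GradedAlgebra 𝒜]
    (hfg : Algebra.FiniteType k A) (χ : Fin n → ℤ) :
    ∃ s : Finset A,
      Subalgebra.toSubmodule (Algebra.adjoin k (s : Set A)) = ⨆ m : ℕ, 𝒜 (m • χ) :=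
  ray_subalgebra_finitely_generated_general k A 𝒜 hfg χ
end
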